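/- arXiv:1106.4661 — 11 statements merged into one kernel-verified Lean document; each statement's English description precedes it below -/
import Mathlib

section
/- Let B be a complex Banach space, D ⊆ B a subspace, and L : D → B a linear map satisfying the dissipativity estimate of generators of contraction semigroups: ‖L x − γ x‖ ≥ γ‖x‖ for every γ > 0 and every x ∈ D. Then the null space and the range of L are transversal: ker L ∩ ran L = {0}. -/
/-!
If `x = L y` and `L x = 0`, then for `w = x + γ y` one has `L w - γ w = -γ² y`, so dissipativity
gives `‖w‖ ≤ γ ‖y‖` and hence `‖x‖ ≤ ‖w‖ + γ ‖y‖ ≤ 2 γ ‖y‖`. Letting `γ → 0⁺` forces `x = 0`.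
-/

open Filter Topology

lemma nonpos_of_forall_pos_le_mul {a c : ℝ} (h : ∀ γ : ℝ, 0 < γ → a ≤ γ * c) : a ≤ 0 := by
  have hlim : Tendsto (fun γ : ℝ => γ * c) (𝓝[>] 0) (𝓝 0) := by
    simpa using ((continuous_mul_const c).tendsto 0).mono_left nhdsWithin_le_nhds
  exact ge_of_tendsto hlim (eventually_nhdsWithin_of_forall h)

section Dissipative

variable {B : Type*} [NormedAddCommGroup B] [NormedSpace ℂ B] {D : Subspace ℂ B}
  {L : D →ₗ[ℂ] B}

lemma apply_add_smul_sub_smul_of_apply_eq {x y : D} (hLx : L x = 0) (hy : L y = x) (γ : ℝ) :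
    L (x + γ • y) - γ • ((x + γ • y : D) : B) = -(γ ^ 2) • (y : B) := by
  rw [map_add, LinearMap.map_smul_of_tower, hLx, hy, Submodule.coe_add,
    Submodule.coe_smul_of_tower]
  module

lemma norm_le_mul_of_dissipative
    (hdiss : ∀ γ : ℝ, 0 < γ → ∀ x : D, γ * ‖(x : B)‖ ≤ ‖L x - γ • (x : B)‖)
    {x y : D} (hLx : L x = 0) (hy : L y = x) {γ : ℝ} (hγ : 0 < γ) :
    ‖(x : B)‖ ≤ γ * (2 * ‖(y : B)‖) := by
  have hw : ‖((x + γ • y : D) : B)‖ ≤ γ * ‖(y : B)‖ := by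
    have h := hdiss γ hγ (x + γ • y)
    rw [apply_add_smul_sub_smul_of_apply_eq hLx hy, norm_smul, norm_neg,
      Real.norm_of_nonneg (sq_nonneg γ), sq, mul_assoc] at h
    exact le_of_mul_le_mul_left h hγ
  calc ‖(x : B)‖ = ‖((x + γ • y : D) : B) - γ • (y : B)‖ := by simp
    _ ≤ ‖((x + γ • y : D) : B)‖ + ‖γ • (y : B)‖ := norm_sub_le _ _
    _ ≤ γ * ‖(y : B)‖ + γ * ‖(y : B)‖ := by
      rw [norm_smul, Real.norm_of_nonneg hγ.le]
      exact add_le_add_left hw _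
    _ = γ * (2 * ‖(y : B)‖) := by ring

end Dissipative

theorem kernel_range_transversal_general
    {B : Type*} [NormedAddCommGroup B] [NormedSpace ℂ B]
    (D : Subspace ℂ B) (L : D →ₗ[ℂ] B)
    (hdiss : ∀ γ : ℝ, 0 < γ → ∀ x : D, γ * ‖(x : B)‖ ≤ ‖L x - γ • (x : B)‖) :
    ∀ x : D, L x = 0 → (∃ y : D, L y = (x : B)) → (x : B) = 0 := by
  rintro x hLx ⟨y, hy⟩
  exact norm_le_zero_iff.mp <| nonpos_of_forall_pos_le_mul fun γ hγ =>
    norm_le_mul_of_dissipative hdiss hLx hy hγ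

/-- Let `B` be a complex Banach space, `D ⊆ B` a subspace and `L : D → B`
a linear map satisfying the dissipativity estimate of generators of contraction semigroups:
`‖L x - γ • x‖ ≥ γ * ‖x‖` for every `γ > 0` and every `x ∈ D`.  Then the null space and the
range of `L` are transversal: `ker L ∩ ran L = {0}`. -/
theorem kernel_range_transversal
    {B : Type*} [NormedAddCommGroup B] [NormedSpace ℂ B] [CompleteSpace B]
    (D : Subspace ℂ B) (L : D →ₗ[ℂ] B)
    (hdiss : ∀ γ : ℝ, 0 < γ → ∀ x : D, γ * ‖(x : B)‖ ≤ ‖L x - γ • (x : B)‖) :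
    ∀ x : D, L x = 0 → (∃ y : D, L y = (x : B)) → (x : B) = 0 :=
  kernel_range_transversal_general D L hdiss
end

section
/- Let P(s), 0 ≤ s ≤ 1, be a C¹ family of bounded projections on a complex Banach space B, and let T(s,s') be the associated parallel transport. Then T intertwines the projections: P(s) T(s,s') = T(s,s') P(s') for all 0 ≤ s', s ≤ 1. In particular T(s,s') maps ran P(s') into ran P(s) and ker P(s') into ker P(s). -/
/-!
Differentiating `P ∘ P = P` gives `Ṗ P + P Ṗ = Ṗ`, and with it the intertwining defect
`F u = P u ∘ T u s' - T u s' ∘ P s'` satisfies the linear equation `Ḟ = [Ṗ, P] F`.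
Since `F s' = 0` and the coefficient is bounded on `[0,1]`, uniqueness of solutions of
Lipschitz ODEs forces `F ≡ 0`.
-/

open Set

section Algebra

variable {R : Type*} [Ring R]

theorem commutator_mul_of_isIdempotentElem {p q : R} (hp : IsIdempotentElem p)
    (hq : q * p + p * q = q) :
    (q * p - p * q) * p = q + p * (q * p - p * q) := by
  have hpqp : p * q * p = 0 := by
    have h := congrArg (p * ·) hq
    simp only [mul_add, ← mul_assoc, hp.eq] at h
    exact add_eq_right.mp h
  calc (q * p - p * q) * p = q * p - p * q * p := by rw [sub_mul, mul_assoc, hp.eq]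
    _ = q * p := by rw [hpqp, sub_zero]
    _ = q + (p * q * p - p * q) := by rw [hpqp, zero_sub, ← sub_eq_add_neg, eq_sub_of_add_eq hq]
    _ = q + p * (q * p - p * q) := by rw [mul_sub, mul_assoc, ← mul_assoc p p, hp.eq]

end Algebra

section Analysis

variable {R : Type*} [NormedRing R]

theorem lipschitzWith_mul_left (a : R) : LipschitzWith ‖a‖₊ (a * ·) :=
  LipschitzWith.of_dist_le_mul fun x y => by
    simpa only [dist_eq_norm, ← mul_sub, coe_nnnorm] using norm_mul_le a (x - y)

variable [NormedAlgebra ℝ R]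

theorem HasDerivWithinAt.mul_add_mul_eq_of_isIdempotentElem {P : ℝ → R} {P' : R} {s : Set ℝ}
    {t : ℝ} (hP : HasDerivWithinAt P P' s t) (hproj : ∀ u ∈ s, IsIdempotentElem (P u))
    (ht : t ∈ s) (hs : UniqueDiffWithinAt ℝ s t) :
    P' * P t + P t * P' = P' :=
  hs.eq_deriv _ (hP.mul hP) (hP.congr (fun u hu => hproj u hu) (hproj t ht))

theorem HasDerivAt.mul_sub_mul_const_of_isIdempotentElem {P T : ℝ → R} {P' : R} {r : R} {t : ℝ}
    (hP : HasDerivAt P P' t) (hT : HasDerivAt T ((P' * P t - P t * P') * T t) t)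
    (hproj : IsIdempotentElem (P t)) (hP' : P' * P t + P t * P' = P') :
    HasDerivAt (fun u => P u * T u - T u * r)
      ((P' * P t - P t * P') * (P t * T t - T t * r)) t := by
  refine ((hP.mul hT).sub (hT.mul_const r)).congr_deriv ?_
  rw [mul_sub, ← mul_assoc _ (P t), commutator_mul_of_isIdempotentElem hproj hP']
  noncomm_ring

theorem eqOn_zero_of_hasDerivAt_mul_left {A F : ℝ → R} {a b t₀ C : ℝ}
    (hA : ∀ t ∈ Icc a b, ‖A t‖ ≤ C) (hF : ∀ t ∈ Icc a b, HasDerivAt F (A t * F t) t)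
    (ht₀ : t₀ ∈ Icc a b) (hF₀ : F t₀ = 0) :
    EqOn F 0 (Icc a b) := by
  have hlip : ∀ t ∈ Icc a b, LipschitzOnWith C.toNNReal (A t * ·) univ := fun t ht =>
    ((lipschitzWith_mul_left (A t)).weaken
      (norm_toNNReal.symm.trans_le (Real.toNNReal_le_toNNReal (hA t ht)))).lipschitzOnWith
  have hcont : ContinuousOn F (Icc a b) := fun t ht => (hF t ht).continuousAt.continuousWithinAt
  have hzero : ∀ t, HasDerivWithinAt (0 : ℝ → R) (A t * 0) univ t := fun t => by
    simp only [mul_zero]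
    exact hasDerivWithinAt_const t univ (0 : R)
  intro t ht
  rcases le_total t₀ t with h | h
  · have hsub : Icc t₀ b ⊆ Icc a b := Icc_subset_Icc_left ht₀.1
    exact ODE_solution_unique_of_mem_Icc_right (s := fun _ => univ)
      (fun u hu => hlip u (hsub (Ico_subset_Icc_self hu))) (hcont.mono hsub)
      (fun u hu => (hF u (hsub (Ico_subset_Icc_self hu))).hasDerivWithinAt)
      (fun _ _ => mem_univ _) continuousOn_const (fun u _ => (hzero u).mono (subset_univ _))
      (fun _ _ => mem_univ _) hF₀ ⟨h, ht.2⟩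
  · have hsub : Icc a t₀ ⊆ Icc a b := Icc_subset_Icc_right ht₀.2
    exact ODE_solution_unique_of_mem_Icc_left (s := fun _ => univ)
      (fun u hu => hlip u (hsub (Ioc_subset_Icc_self hu))) (hcont.mono hsub)
      (fun u hu => (hF u (hsub (Ioc_subset_Icc_self hu))).hasDerivWithinAt)
      (fun _ _ => mem_univ _) continuousOn_const (fun u _ => (hzero u).mono (subset_univ _))
      (fun _ _ => mem_univ _) hF₀ ⟨ht.1, h⟩

end Analysis

theorem parallel_transport_intertwines_general
    {B : Type*} [NormedAddCommGroup B] [NormedSpace ℂ B]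
    (P P' : ℝ → B →L[ℂ] B) (T : ℝ → ℝ → B →L[ℂ] B)
    -- `P s` is a projection for every `s ∈ [0,1]`
    (hproj : ∀ s ∈ Icc (0:ℝ) 1, (P s).comp (P s) = P s)
    -- the family is `C¹`: `P'` is the derivative of `P` and is continuous
    (hP' : ∀ s ∈ Icc (0:ℝ) 1, HasDerivAt P (P' s) s)
    (hP'cont : ContinuousOn P' (Icc (0:ℝ) 1))
    -- parallel transport: initial condition and transport equation
    (hTinit : ∀ s' ∈ Icc (0:ℝ) 1, T s' s' = 1)
    (hTode : ∀ s' ∈ Icc (0:ℝ) 1, ∀ s ∈ Icc (0:ℝ) 1,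
      HasDerivAt (fun u => T u s')
        ((((P' s).comp (P s) - (P s).comp (P' s)).comp (T s s'))) s) :
    ∀ s ∈ Icc (0:ℝ) 1, ∀ s' ∈ Icc (0:ℝ) 1,
      (P s).comp (T s s') = (T s s').comp (P s') ∧
      (∀ x ∈ LinearMap.range (P s' : B →ₗ[ℂ] B), T s s' x ∈ LinearMap.range (P s : B →ₗ[ℂ] B)) ∧
      (∀ x ∈ LinearMap.ker (P s' : B →ₗ[ℂ] B), T s s' x ∈ LinearMap.ker (P s : B →ₗ[ℂ] B)) := by
  intro s hs s' hs'
  have hP'P : ∀ t ∈ Icc (0:ℝ) 1, P' t * P t + P t * P' t = P' t := fun t ht =>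
    (hP' t ht).hasDerivWithinAt.mul_add_mul_eq_of_isIdempotentElem hproj ht
      (uniqueDiffOn_Icc_zero_one t ht)
  have hPcont : ContinuousOn P (Icc (0:ℝ) 1) := fun t ht =>
    (hP' t ht).continuousAt.continuousWithinAt
  obtain ⟨C, hC⟩ := isCompact_Icc.exists_bound_of_continuousOn
    ((hP'cont.mul hPcont).sub (hPcont.mul hP'cont))
  have hdefect : EqOn (fun u => P u * T u s' - T u s' * P s') 0 (Icc 0 1) :=
    eqOn_zero_of_hasDerivAt_mul_left hC
      (fun t ht => (hP' t ht).mul_sub_mul_const_of_isIdempotentElem (hTode s' hs' t ht)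
        (hproj t ht) (hP'P t ht))
      hs' (by simp [hTinit s' hs'])
  have hcomm : (P s).comp (T s s') = (T s s').comp (P s') := sub_eq_zero.mp (hdefect hs)
  have hcomm_apply (x : B) : P s (T s s' x) = T s s' (P s' x) := DFunLike.congr_fun hcomm x
  refine ⟨hcomm, ?_, fun x hx => ?_⟩
  · rintro _ ⟨y, rfl⟩
    exact ⟨T s s' y, hcomm_apply y⟩
  · simp only [LinearMap.mem_ker, ContinuousLinearMap.coe_coe] at hx ⊢
    rw [hcomm_apply, hx, map_zero]

/-- Let `P s`, `0 ≤ s ≤ 1`, be a `C¹` family of bounded projections on a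
complex Banach space `B` and let `T s s'` be the associated parallel transport, i.e.
`T s' s' = 1` and `∂ₛ T s s' = [Ṗ s, P s] T s s'`.  Then `T` intertwines the projections:
`P s ∘ T s s' = T s s' ∘ P s'`; in particular `T s s'` maps `ran (P s')` into `ran (P s)`
and `ker (P s')` into `ker (P s)`. -/
theorem parallel_transport_intertwines
    {B : Type*} [NormedAddCommGroup B] [NormedSpace ℂ B] [CompleteSpace B]
    (P P' : ℝ → B →L[ℂ] B) (T : ℝ → ℝ → B →L[ℂ] B)
    -- `P s` is a projection for every `s ∈ [0,1]`
    (hproj : ∀ s ∈ Icc (0:ℝ) 1, (P s).comp (P s) = P s)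
    -- the family is `C¹`: `P'` is the derivative of `P` and is continuous
    (hP' : ∀ s ∈ Icc (0:ℝ) 1, HasDerivAt P (P' s) s)
    (hP'cont : ContinuousOn P' (Icc (0:ℝ) 1))
    -- parallel transport: initial condition and transport equation
    (hTinit : ∀ s' ∈ Icc (0:ℝ) 1, T s' s' = 1)
    (hTode : ∀ s' ∈ Icc (0:ℝ) 1, ∀ s ∈ Icc (0:ℝ) 1,
      HasDerivAt (fun u => T u s')
        ((((P' s).comp (P s) - (P s).comp (P' s)).comp (T s s'))) s) :
    ∀ s ∈ Icc (0:ℝ) 1, ∀ s' ∈ Icc (0:ℝ) 1,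
      (P s).comp (T s s') = (T s s').comp (P s') ∧
      (∀ x ∈ LinearMap.range (P s' : B →ₗ[ℂ] B), T s s' x ∈ LinearMap.range (P s : B →ₗ[ℂ] B)) ∧
      (∀ x ∈ LinearMap.ker (P s' : B →ₗ[ℂ] B), T s s' x ∈ LinearMap.ker (P s : B →ₗ[ℂ] B)) :=
  parallel_transport_intertwines_general P P' T hproj hP' hP'cont hTinit hTode
end

section
/- Let P(s), 0 ≤ s ≤ 1, be a C¹ family of bounded projections on a complex Banach space B with parallel transport T(s,s'), and let x : [0,1] → B be a C¹ section of the bundle of ranges, i.e. x(s) ∈ ran P(s) for all s. Then x(s) = T(s,0)x(0) for all s ∈ [0,1] if and only if the projected velocity vanishes: P(s)ẋ(s) = 0 for all s ∈ [0,1]. -/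
/-!
Differentiating `P² = P` gives `Ṗ = ṖP + PṖ`, hence `PṖP = 0`. On a section (`Px = x`) the
generator `[Ṗ, P]` therefore acts as `Ṗ`, and differentiating `Px = x` gives
`Pẋ = ẋ - [Ṗ, P]x`. So `Pẋ = 0` says exactly that `x` solves the transport equation
`ẋ = [Ṗ, P]x`, and `T(·, 0)x(0)` is its solution with the same initial value; solutions of this
linear equation are unique because `[Ṗ, P]` is bounded on `[0, 1]`.
-/

open Set

theorem IsIdempotentElem.mul_mul_eq_zero_of_eq_add {R : Type*} [Ring R] {e d : R}
    (he : IsIdempotentElem e) (hd : d = d * e + e * d) : e * d * e = 0 := by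
  have h : e * d = e * d * e + e * d := by
    conv_lhs => rw [hd]
    rw [mul_add, ← mul_assoc, ← mul_assoc, he.eq]
  exact add_eq_right.mp h.symm

theorem HasDerivWithinAt.eq_mul_add_mul_of_isIdempotentElem {𝔸 : Type*} [NormedRing 𝔸]
    [NormedAlgebra ℝ 𝔸] {p : ℝ → 𝔸} {p' : 𝔸} {s : Set ℝ} {t : ℝ}
    (hp : HasDerivWithinAt p p' s t) (hidem : ∀ u ∈ s, IsIdempotentElem (p u)) (ht : t ∈ s)
    (hs : UniqueDiffWithinAt ℝ s t) : p' = p' * p t + p t * p' :=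
  hs.eq_deriv _ hp ((hp.mul hp).congr (fun u hu => (hidem u hu).symm) (hidem t ht).symm)

theorem HasDerivWithinAt.clm_apply_of_isScalarTower {𝕜 E F : Type*} [NontriviallyNormedField 𝕜]
    [NormedAlgebra ℝ 𝕜] [NormedAddCommGroup E] [NormedSpace 𝕜 E] [NormedSpace ℝ E]
    [IsScalarTower ℝ 𝕜 E] [NormedAddCommGroup F] [NormedSpace 𝕜 F] [NormedSpace ℝ F]
    [IsScalarTower ℝ 𝕜 F] {c : ℝ → E →L[𝕜] F} {c' : E →L[𝕜] F} {u : ℝ → E} {u' : E}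
    {s : Set ℝ} {t : ℝ} (hc : HasDerivWithinAt c c' s t) (hu : HasDerivWithinAt u u' s t) :
    HasDerivWithinAt (fun y => c y (u y)) (c' (u t) + c t u') s t :=
  ((ContinuousLinearMap.restrictScalarsL 𝕜 E F ℝ ℝ).hasFDerivAt.comp_hasDerivWithinAt t
    hc).clm_apply hu

theorem linear_ODE_solution_unique_of_mem_Icc {𝕜 E : Type*} [NontriviallyNormedField 𝕜]
    [NormedAddCommGroup E] [NormedSpace 𝕜 E] [NormedSpace ℝ E]
    {A : ℝ → E →L[𝕜] E} {f g : ℝ → E} {a b : ℝ} (hA : ContinuousOn A (Icc a b))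
    (hf : ContinuousOn f (Icc a b)) (hf' : ∀ t ∈ Ico a b, HasDerivWithinAt f (A t (f t)) (Ici t) t)
    (hg : ContinuousOn g (Icc a b)) (hg' : ∀ t ∈ Ico a b, HasDerivWithinAt g (A t (g t)) (Ici t) t)
    (ha : f a = g a) : EqOn f g (Icc a b) := by
  obtain ⟨C, hC⟩ := isCompact_Icc.exists_bound_of_continuousOn hA
  have hlip : ∀ t ∈ Ico a b, LipschitzOnWith C.toNNReal (A t) univ := fun t ht =>
    have hAt : ‖A t‖₊ ≤ C.toNNReal := by
      simpa [← NNReal.coe_le_coe] using Or.inl (hC t (Ico_subset_Icc_self ht))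
    ((A t).lipschitz.weaken hAt).lipschitzOnWith
  exact ODE_solution_unique_of_mem_Icc_right hlip hf hf' (fun _ _ => mem_univ _) hg hg'
    (fun _ _ => mem_univ _) ha

theorem eqOn_Icc_iff_deriv_eq_of_linear_ODE {𝕜 E : Type*} [NontriviallyNormedField 𝕜]
    [NormedAddCommGroup E] [NormedSpace 𝕜 E] [NormedSpace ℝ E]
    {A : ℝ → E →L[𝕜] E} {f f' g : ℝ → E} {a b : ℝ} (hab : a < b)
    (hA : ContinuousOn A (Icc a b)) (hf : ∀ t ∈ Icc a b, HasDerivWithinAt f (f' t) (Icc a b) t)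
    (hg : ∀ t ∈ Icc a b, HasDerivWithinAt g (A t (g t)) (Icc a b) t) (ha : f a = g a) :
    EqOn f g (Icc a b) ↔ ∀ t ∈ Icc a b, f' t = A t (f t) := by
  have hIcc_mem : ∀ t ∈ Ico a b, Icc a b ∈ nhdsWithin t (Ici t) := fun t ht =>
    Icc_mem_nhdsGE_of_mem ht
  constructor
  · intro hfg t ht
    rw [hfg ht]
    exact (uniqueDiffOn_Icc hab t ht).eq_deriv _ (hf t ht) ((hg t ht).congr hfg (hfg ht))
  · intro hf'
    refine linear_ODE_solution_unique_of_mem_Icc hA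
      (fun t ht => (hf t ht).continuousWithinAt) (fun t ht => ?_)
      (fun t ht => (hg t ht).continuousWithinAt) (fun t ht => ?_) ha
    · rw [← hf' t (Ico_subset_Icc_self ht)]
      exact (hf t (Ico_subset_Icc_self ht)).mono_of_mem_nhdsWithin (hIcc_mem t ht)
    · exact (hg t (Ico_subset_Icc_self ht)).mono_of_mem_nhdsWithin (hIcc_mem t ht)

theorem ContinuousLinearMap.apply_add_lie_apply_eq {𝕜 E : Type*} [NontriviallyNormedField 𝕜]
    [NormedAddCommGroup E] [NormedSpace 𝕜 E] {p p' : E →L[𝕜] E} {x x' : E}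
    (hp : IsIdempotentElem p) (hpp' : p' = p' * p + p * p') (hx : p x = x)
    (hx' : p' x + p x' = x') : p x' + ⁅p', p⁆ x = x' := by
  have hpp'x : p (p' x) = 0 := by
    rw [← hx, ← mul_apply_eq_comp, ← mul_apply_eq_comp, hp.mul_mul_eq_zero_of_eq_add hpp',
      zero_apply]
  rw [Ring.lie_def, sub_apply, mul_apply_eq_comp, mul_apply_eq_comp, hx, hpp'x, sub_zero,
    add_comm, hx']

theorem HasDerivWithinAt.apply_add_lie_apply_eq_of_isIdempotentElem {E : Type*}
    [NormedAddCommGroup E] [NormedSpace ℂ E] {P : ℝ → E →L[ℂ] E} {p' : E →L[ℂ] E} {x : ℝ → E}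
    {x' : E} {s : Set ℝ} {t : ℝ} (hP : HasDerivWithinAt P p' s t) (hx : HasDerivWithinAt x x' s t)
    (hidem : ∀ u ∈ s, IsIdempotentElem (P u))
    (hsec : ∀ u ∈ s, P u (x u) = x u) (ht : t ∈ s) (hs : UniqueDiffWithinAt ℝ s t) :
    P t x' + ⁅p', P t⁆ (x t) = x' :=
  ContinuousLinearMap.apply_add_lie_apply_eq (hidem t ht)
    (hP.eq_mul_add_mul_of_isIdempotentElem hidem ht hs) (hsec t ht)
    (hs.eq_deriv _ (hP.clm_apply_of_isScalarTower hx) (hx.congr hsec (hsec t ht)))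

theorem parallel_transport_section_iff_general
    {B : Type*} [NormedAddCommGroup B] [NormedSpace ℂ B]
    (P P' : ℝ → B →L[ℂ] B) (T : ℝ → ℝ → B →L[ℂ] B)
    -- `P s` is a projection for every `s ∈ [0,1]`
    (hproj : ∀ s ∈ Icc (0:ℝ) 1, (P s).comp (P s) = P s)
    -- the family is `C¹`: `P'` is the derivative of `P` and is continuous
    (hP' : ∀ s ∈ Icc (0:ℝ) 1, HasDerivAt P (P' s) s)
    (hP'cont : ContinuousOn P' (Icc (0:ℝ) 1))
    -- parallel transport: initial condition and transport equation
    (hTinit : ∀ s' ∈ Icc (0:ℝ) 1, T s' s' = 1)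
    (hTode : ∀ s' ∈ Icc (0:ℝ) 1, ∀ s ∈ Icc (0:ℝ) 1,
      HasDerivAt (fun u => T u s')
        ((((P' s).comp (P s) - (P s).comp (P' s)).comp (T s s'))) s)
    -- `x` is a `C¹` section of the bundle of ranges of the projections
    (x x' : ℝ → B)
    (hx' : ∀ s ∈ Icc (0:ℝ) 1, HasDerivAt x (x' s) s)
    (hsec : ∀ s ∈ Icc (0:ℝ) 1, x s ∈ LinearMap.range (P s : B →ₗ[ℂ] B)) :
    (∀ s ∈ Icc (0:ℝ) 1, x s = T s 0 (x 0)) ↔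
      (∀ s ∈ Icc (0:ℝ) 1, P s (x' s) = 0) := by
  have h0 : (0:ℝ) ∈ Icc (0:ℝ) 1 := left_mem_Icc.mpr zero_le_one
  have hPx : ∀ s ∈ Icc (0:ℝ) 1, P s (x s) = x s := by
    intro s hs
    obtain ⟨y, hy⟩ := hsec s hs
    rw [← hy]
    exact congr($(hproj s hs) y)
  have hPcont : ContinuousOn P (Icc (0:ℝ) 1) := fun s hs =>
    (hP' s hs).continuousAt.continuousWithinAt
  have htransport : ∀ s ∈ Icc (0:ℝ) 1, HasDerivWithinAt (fun u => T u 0 (x 0))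
      (⁅P' s, P s⁆ (T s 0 (x 0))) (Icc (0:ℝ) 1) s := fun s hs => by
    simpa [Ring.lie_def, mul_apply_eq_comp] using
      (hTode 0 h0 s hs).hasDerivWithinAt.clm_apply_of_isScalarTower
        (hasDerivWithinAt_const s (Icc (0:ℝ) 1) (x 0))
  have hsection : ∀ s ∈ Icc (0:ℝ) 1, P s (x' s) + ⁅P' s, P s⁆ (x s) = x' s := fun s hs =>
    (hP' s hs).hasDerivWithinAt.apply_add_lie_apply_eq_of_isIdempotentElem
      (hx' s hs).hasDerivWithinAt hproj hPx hs (uniqueDiffOn_Icc one_pos s hs)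
  calc (∀ s ∈ Icc (0:ℝ) 1, x s = T s 0 (x 0))
      ↔ ∀ s ∈ Icc (0:ℝ) 1, x' s = ⁅P' s, P s⁆ (x s) :=
        eqOn_Icc_iff_deriv_eq_of_linear_ODE one_pos
          ((hP'cont.mul hPcont).sub (hPcont.mul hP'cont))
          (fun s hs => (hx' s hs).hasDerivWithinAt) htransport (by simp [hTinit 0 h0])
    _ ↔ ∀ s ∈ Icc (0:ℝ) 1, P s (x' s) = 0 := by
        refine forall₂_congr fun s hs => ?_
        rw [eq_sub_of_add_eq (hsection s hs), sub_eq_zero]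

/-- Let `P s`, `0 ≤ s ≤ 1`, be a `C¹` family of bounded projections on a
complex Banach space `B` with parallel transport `T s s'`, and let `x : [0,1] → B` be a `C¹`
section of the bundle of ranges, i.e. `x s ∈ ran (P s)` for all `s`.  Then
`x s = T s 0 (x 0)` for all `s ∈ [0,1]` if and only if the projected velocity vanishes:
`P s (ẋ s) = 0` for all `s ∈ [0,1]`. -/
theorem parallel_transport_section_iff
    {B : Type*} [NormedAddCommGroup B] [NormedSpace ℂ B] [CompleteSpace B]
    (P P' : ℝ → B →L[ℂ] B) (T : ℝ → ℝ → B →L[ℂ] B)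
    -- `P s` is a projection for every `s ∈ [0,1]`
    (hproj : ∀ s ∈ Icc (0:ℝ) 1, (P s).comp (P s) = P s)
    -- the family is `C¹`: `P'` is the derivative of `P` and is continuous
    (hP' : ∀ s ∈ Icc (0:ℝ) 1, HasDerivAt P (P' s) s)
    (hP'cont : ContinuousOn P' (Icc (0:ℝ) 1))
    -- parallel transport: initial condition and transport equation
    (hTinit : ∀ s' ∈ Icc (0:ℝ) 1, T s' s' = 1)
    (hTode : ∀ s' ∈ Icc (0:ℝ) 1, ∀ s ∈ Icc (0:ℝ) 1,
      HasDerivAt (fun u => T u s')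
        ((((P' s).comp (P s) - (P s).comp (P' s)).comp (T s s'))) s)
    -- `x` is a `C¹` section of the bundle of ranges of the projections
    (x x' : ℝ → B)
    (hx' : ∀ s ∈ Icc (0:ℝ) 1, HasDerivAt x (x' s) s)
    (hx'cont : ContinuousOn x' (Icc (0:ℝ) 1))
    (hsec : ∀ s ∈ Icc (0:ℝ) 1, x s ∈ LinearMap.range (P s : B →ₗ[ℂ] B)) :
    (∀ s ∈ Icc (0:ℝ) 1, x s = T s 0 (x 0)) ↔
      (∀ s ∈ Icc (0:ℝ) 1, P s (x' s) = 0) :=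
  parallel_transport_section_iff_general P P' T hproj hP' hP'cont hTinit hTode x x' hx' hsec
end

section
/- Let P(s), 0 ≤ s ≤ 1, be a C¹ family of bounded projections of rank 1 on a complex Banach space B, and suppose ker P(s) is independent of s. Then Ṗ(s) vanishes on ker P(s) (i.e. Ṗ(s)y = 0 for every y ∈ ker P(s)), and P(s) = T(s,s') P(s') for all s, s' ∈ [0,1], where T is the parallel transport associated to the family P(s). -/
open Set

/-!
Since all `P u` share the kernel of `P s`, `P u (1 - P s) = 0` for every `u`; differentiating at
`u = s` gives `Ṗ (1 - P) = 0`, so `Ṗ` vanishes on `ker P` and `Ṗ = Ṗ P`. Differentiating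
`P² = P` gives `P Ṗ P = 0`. Hence `Ṗ = [Ṗ, P] P`: both `u ↦ P u` and `u ↦ T u s' * P s'`
solve the linear equation `X' = [Ṗ, P] X` in the normed algebra of operators, with the same
value at `s'`, and they agree by uniqueness for linear ODEs with continuous coefficients.
-/

section NormedAlgebra

variable {𝔸 : Type*} [NormedRing 𝔸] [NormedAlgebra ℝ 𝔸]

theorem HasDerivWithinAt.mul_const_eq_zero {F : ℝ → 𝔸} {F' c : 𝔸} {s : Set ℝ} {x : ℝ}
    (hF : HasDerivWithinAt F F' s x) (hs : UniqueDiffWithinAt ℝ s x) (hx : x ∈ s)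
    (h : ∀ u ∈ s, F u * c = 0) : F' * c = 0 :=
  hs.eq_deriv s (hF.mul_const c) ((hasDerivWithinAt_const x s 0).congr_of_mem h hx)

theorem HasDerivWithinAt.mul_deriv_mul_eq_zero_of_idempotent {F : ℝ → 𝔸} {F' : 𝔸}
    {s : Set ℝ} {x : ℝ} (hF : HasDerivWithinAt F F' s x) (hs : UniqueDiffWithinAt ℝ s x)
    (hx : x ∈ s) (h : ∀ u ∈ s, F u * F u = F u) : F x * F' * F x = 0 := by
  have hderiv : F' * F x + F x * F' = F' := hs.eq_deriv s (hF.mul hF) (hF.congr_of_mem h hx)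
  have hidem : F x * F x = F x := h x hx
  have hidem' (y : 𝔸) : F x * (F x * y) = F x * y := by rw [← mul_assoc, hidem]
  have key := congrArg (fun y => F x * y * F x) hderiv
  simp only [mul_add, add_mul, mul_assoc, hidem, hidem'] at key
  simpa [mul_assoc] using key

theorem linear_ODE_solution_unique_of_mem_Icc_s3 {D f g : ℝ → 𝔸} {a b t₀ : ℝ}
    (hD : ContinuousOn D (Icc a b)) (ht₀ : t₀ ∈ Icc a b)
    (hf : ∀ t ∈ Icc a b, HasDerivAt f (D t * f t) t)
    (hg : ∀ t ∈ Icc a b, HasDerivAt g (D t * g t) t) (heq : f t₀ = g t₀) :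
    EqOn f g (Icc a b) := by
  obtain ⟨C, hC⟩ := isCompact_Icc.exists_bound_of_continuousOn hD
  have hlip : ∀ t ∈ Icc a b, LipschitzOnWith C.toNNReal (D t * ·) univ := fun t ht =>
    LipschitzWith.lipschitzOnWith <| (ContinuousLinearMap.mul ℝ 𝔸 (D t)).lipschitz.weaken <| by
      rw [← NNReal.coe_le_coe, Real.coe_toNNReal', coe_nnnorm]
      exact le_max_of_le_left
        ((ContinuousLinearMap.opNorm_mul_apply_le ℝ 𝔸 (D t)).trans (hC t ht))
  have hfc : ContinuousOn f (Icc a b) := fun t ht => (hf t ht).continuousAt.continuousWithinAt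
  have hgc : ContinuousOn g (Icc a b) := fun t ht => (hg t ht).continuousAt.continuousWithinAt
  rw [← Icc_union_Icc_eq_Icc ht₀.1 ht₀.2]
  refine EqOn.union ?_ ?_
  · have hsub : Icc a t₀ ⊆ Icc a b := Icc_subset_Icc_right ht₀.2
    exact ODE_solution_unique_of_mem_Icc_left
      (fun t ht => hlip t (hsub (Ioc_subset_Icc_self ht)))
      (hfc.mono hsub) (fun t ht => (hf t (hsub (Ioc_subset_Icc_self ht))).hasDerivWithinAt)
      (fun _ _ => mem_univ _)
      (hgc.mono hsub) (fun t ht => (hg t (hsub (Ioc_subset_Icc_self ht))).hasDerivWithinAt)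
      (fun _ _ => mem_univ _) heq
  · have hsub : Icc t₀ b ⊆ Icc a b := Icc_subset_Icc_left ht₀.1
    exact ODE_solution_unique_of_mem_Icc_right
      (fun t ht => hlip t (hsub (Ico_subset_Icc_self ht)))
      (hfc.mono hsub) (fun t ht => (hf t (hsub (Ico_subset_Icc_self ht))).hasDerivWithinAt)
      (fun _ _ => mem_univ _)
      (hgc.mono hsub) (fun t ht => (hg t (hsub (Ico_subset_Icc_self ht))).hasDerivWithinAt)
      (fun _ _ => mem_univ _) heq

end NormedAlgebra

theorem ContinuousLinearMap.mul_one_sub_eq_zero_of_ker_le {𝕜 E : Type*}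
    [NontriviallyNormedField 𝕜] [NormedAddCommGroup E] [NormedSpace 𝕜 E] {P Q : E →L[𝕜] E}
    (hQ : Q.comp Q = Q)
    (hker : LinearMap.ker (Q : E →ₗ[𝕜] E) ≤ LinearMap.ker (P : E →ₗ[𝕜] E)) : P * (1 - Q) = 0 := by
  ext x
  have hx : x - Q x ∈ LinearMap.ker (Q : E →ₗ[𝕜] E) := by
    simp [LinearMap.mem_ker, ← ContinuousLinearMap.comp_apply Q Q, hQ]
  simpa using hker hx

theorem rank_one_projection_parallel_transport_general
    {B : Type*} [NormedAddCommGroup B] [NormedSpace ℂ B]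
    (P P' : ℝ → B →L[ℂ] B) (T : ℝ → ℝ → B →L[ℂ] B)
    -- `P s` is a projection for every `s ∈ [0,1]`
    (hproj : ∀ s ∈ Icc (0:ℝ) 1, (P s).comp (P s) = P s)
    -- the family is `C¹`: `P'` is the derivative of `P` and is continuous
    (hP' : ∀ s ∈ Icc (0:ℝ) 1, HasDerivAt P (P' s) s)
    (hP'cont : ContinuousOn P' (Icc (0:ℝ) 1))
    -- the kernel of `P s` does not depend on `s`
    (hker : ∀ s ∈ Icc (0:ℝ) 1, ∀ s' ∈ Icc (0:ℝ) 1,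
      LinearMap.ker (P s : B →ₗ[ℂ] B) = LinearMap.ker (P s' : B →ₗ[ℂ] B))
    -- parallel transport: initial condition and transport equation
    (hTinit : ∀ s' ∈ Icc (0:ℝ) 1, T s' s' = 1)
    (hTode : ∀ s' ∈ Icc (0:ℝ) 1, ∀ s ∈ Icc (0:ℝ) 1,
      HasDerivAt (fun u => T u s')
        ((((P' s).comp (P s) - (P s).comp (P' s)).comp (T s s'))) s) :
    (∀ s ∈ Icc (0:ℝ) 1, ∀ y ∈ LinearMap.ker (P s : B →ₗ[ℂ] B), P' s y = 0) ∧
    (∀ s ∈ Icc (0:ℝ) 1, ∀ s' ∈ Icc (0:ℝ) 1, P s = (T s s').comp (P s')) := by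
  simp only [← ContinuousLinearMap.mul_def] at hproj hTode ⊢
  have hUD : UniqueDiffOn ℝ (Icc (0:ℝ) 1) := uniqueDiffOn_Icc zero_lt_one
  have hP'_ker (s) (hs : s ∈ Icc (0:ℝ) 1) : P' s * (1 - P s) = 0 :=
    (hP' s hs).hasDerivWithinAt.mul_const_eq_zero (hUD s hs) hs fun u hu =>
      ContinuousLinearMap.mul_one_sub_eq_zero_of_ker_le (hproj s hs) (hker s hs u hu).le
  have hPP'P (s) (hs : s ∈ Icc (0:ℝ) 1) : P s * P' s * P s = 0 :=
    (hP' s hs).hasDerivWithinAt.mul_deriv_mul_eq_zero_of_idempotent (hUD s hs) hs hproj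
  refine ⟨fun s hs y hy => ?_, fun s hs s' hs' => ?_⟩
  · have hPy : P s y = 0 := hy
    simpa [hPy] using congrArg (· y) (hP'_ker s hs)
  set D : ℝ → B →L[ℂ] B := fun u => P' u * P u - P u * P' u
  have hD : ContinuousOn D (Icc 0 1) := by
    have hPc : ContinuousOn P (Icc 0 1) := fun u hu => (hP' u hu).continuousAt.continuousWithinAt
    exact (hP'cont.mul hPc).sub (hPc.mul hP'cont)
  have hP_ode (u) (hu : u ∈ Icc (0:ℝ) 1) : HasDerivAt P (D u * P u) u := by
    have hP'P : P' u * P u = P' u := by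
      simpa only [mul_sub, mul_one, sub_eq_zero, eq_comm] using hP'_ker u hu
    convert hP' u hu using 1
    simp only [D, sub_mul, hP'P, hPP'P u hu, sub_zero]
  have hT_ode (u) (hu : u ∈ Icc (0:ℝ) 1) :
      HasDerivAt (fun u => T u s' * P s') (D u * (T u s' * P s')) u := by
    simpa only [mul_assoc] using (hTode s' hs' u hu).mul_const (P s')
  exact linear_ODE_solution_unique_of_mem_Icc_s3 hD hs' hP_ode hT_ode
    (by rw [hTinit s' hs', one_mul]) hs

/-- Let `P s`, `0 ≤ s ≤ 1`, be a `C¹` family of bounded rank-one projections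
on a complex Banach space `B`, and suppose `ker (P s)` is independent of `s`.  Then `Ṗ s`
vanishes on `ker (P s)`, and `P s = T s s' ∘ P s'` for all `s, s' ∈ [0,1]`, where `T` is
the parallel transport associated to the family. -/
theorem rank_one_projection_parallel_transport
    {B : Type*} [NormedAddCommGroup B] [NormedSpace ℂ B] [CompleteSpace B]
    (P P' : ℝ → B →L[ℂ] B) (T : ℝ → ℝ → B →L[ℂ] B)
    -- `P s` is a projection for every `s ∈ [0,1]`
    (hproj : ∀ s ∈ Icc (0:ℝ) 1, (P s).comp (P s) = P s)
    -- rank one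
    (hrank : ∀ s ∈ Icc (0:ℝ) 1, Module.finrank ℂ (LinearMap.range (P s : B →ₗ[ℂ] B)) = 1)
    -- the family is `C¹`: `P'` is the derivative of `P` and is continuous
    (hP' : ∀ s ∈ Icc (0:ℝ) 1, HasDerivAt P (P' s) s)
    (hP'cont : ContinuousOn P' (Icc (0:ℝ) 1))
    -- the kernel of `P s` does not depend on `s`
    (hker : ∀ s ∈ Icc (0:ℝ) 1, ∀ s' ∈ Icc (0:ℝ) 1,
      LinearMap.ker (P s : B →ₗ[ℂ] B) = LinearMap.ker (P s' : B →ₗ[ℂ] B))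
    -- parallel transport: initial condition and transport equation
    (hTinit : ∀ s' ∈ Icc (0:ℝ) 1, T s' s' = 1)
    (hTode : ∀ s' ∈ Icc (0:ℝ) 1, ∀ s ∈ Icc (0:ℝ) 1,
      HasDerivAt (fun u => T u s')
        ((((P' s).comp (P s) - (P s).comp (P' s)).comp (T s s'))) s) :
    (∀ s ∈ Icc (0:ℝ) 1, ∀ y ∈ LinearMap.ker (P s : B →ₗ[ℂ] B), P' s y = 0) ∧
    (∀ s ∈ Icc (0:ℝ) 1, ∀ s' ∈ Icc (0:ℝ) 1, P s = (T s s').comp (P s')) :=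
  rank_one_projection_parallel_transport_general P P' T hproj hP' hP'cont hker hTinit hTode
end

section
/- Adiabatic invariants (integral identity). Let B be a complex Banach space with dual B*, let L(s), 0 ≤ s ≤ 1, be a norm-continuous family of bounded operators on B with adjoints L(s)* on B*, and fix ε > 0. Suppose φ : [0,1] → B* is C¹ with L(s)*φ(s) = 0 for all s, and suppose ψ : [0,1] → B* is continuous with L(s)*ψ(s) = φ̇(s) for all s. Then every C¹ solution x : [0,1] → B of ε ẋ(s) = L(s)x(s) satisfies ⟨φ(s), x(s)⟩ − ⟨φ(0), x(0)⟩ = ε ∫₀ˢ ⟨ψ(s'), ẋ(s')⟩ ds' for all s ∈ [0,1]. -/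
open Set MeasureTheory

/-! Along a solution, `φ(s)` annihilates `ẋ = L(s)x/ε`, so only the motion of `φ` changes the pairing:
`d/ds ⟨φ, x⟩ = ⟨φ̇, x⟩ = ⟨L*ψ, x⟩ = ⟨ψ, Lx⟩ = ε ⟨ψ, ẋ⟩`. Integrate from `0` to `s`. -/

theorem HasDerivAt.clm_apply_of_restrictScalars {𝕜 E F : Type*} [NontriviallyNormedField 𝕜]
    [NormedAlgebra ℝ 𝕜] [NormedAddCommGroup E] [NormedSpace 𝕜 E] [NormedSpace ℝ E]
    [IsScalarTower ℝ 𝕜 E] [NormedAddCommGroup F] [NormedSpace 𝕜 F] [NormedSpace ℝ F]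
    [IsScalarTower ℝ 𝕜 F] {φ : ℝ → E →L[𝕜] F} {φ' : E →L[𝕜] F} {x : ℝ → E} {x' : E} {t : ℝ}
    (hφ : HasDerivAt φ φ' t) (hx : HasDerivAt x x' t) :
    HasDerivAt (fun u => φ u (x u)) (φ' (x t) + φ t x') t := by
  let R := ContinuousLinearMap.restrictScalarsL 𝕜 E F ℝ ℝ
  exact (R.hasFDerivAt.comp_hasDerivAt t hφ).clm_apply hx

section Adjoint

variable {B : Type*} [NormedAddCommGroup B] [NormedSpace ℂ B]
  {L : B →L[ℂ] B} {φ ψ : B →L[ℂ] ℂ} {ε : ℝ} {x x' : B}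

theorem apply_eq_zero_of_comp_eq_zero (hφ : φ.comp L = 0) (hε : ε ≠ 0) (hode : ε • x' = L x) :
    φ x' = 0 := by
  have h : ε • φ x' = 0 := by
    rw [← φ.map_smul_of_tower, hode, ← ContinuousLinearMap.comp_apply, hφ]
    rfl
  simpa [hε] using h

theorem comp_apply_eq_smul_of_smul_eq (hode : ε • x' = L x) : (ψ.comp L) x = ε • ψ x' := by
  rw [ContinuousLinearMap.comp_apply, ← hode, ψ.map_smul_of_tower]

end Adjoint

theorem adiabatic_invariant_integral_identity_general
    {B : Type*} [NormedAddCommGroup B] [NormedSpace ℂ B]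
    (L : ℝ → B →L[ℂ] B)
    (ε : ℝ) (hε : 0 < ε)
    (φ φ' ψ : ℝ → B →L[ℂ] ℂ)
    -- `φ` is `C¹` with derivative `φ'`
    (hφ' : ∀ s ∈ Icc (0:ℝ) 1, HasDerivAt φ (φ' s) s)
    -- `φ(s) ∈ ker L(s)*`
    (hφker : ∀ s ∈ Icc (0:ℝ) 1, (φ s).comp (L s) = 0)
    -- `ψ` is continuous with `L(s)* ψ(s) = φ̇(s)`
    (hψcont : ContinuousOn ψ (Icc (0:ℝ) 1))
    (hψ : ∀ s ∈ Icc (0:ℝ) 1, (ψ s).comp (L s) = φ' s)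
    -- `x` is a `C¹` solution of `ε ẋ = L(s) x`
    (x x' : ℝ → B)
    (hx' : ∀ s ∈ Icc (0:ℝ) 1, HasDerivAt x (x' s) s)
    (hx'cont : ContinuousOn x' (Icc (0:ℝ) 1))
    (hode : ∀ s ∈ Icc (0:ℝ) 1, ε • x' s = L s (x s)) :
    ∀ s ∈ Icc (0:ℝ) 1,
      φ s (x s) - φ 0 (x 0) = ε • ∫ t in (0:ℝ)..s, ψ t (x' t) := by
  intro s hs
  have hderiv : ∀ t ∈ Icc (0:ℝ) 1, HasDerivAt (fun u => φ u (x u)) (ε • ψ t (x' t)) t := by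
    intro t ht
    have h := (hφ' t ht).clm_apply_of_restrictScalars (hx' t ht)
    rwa [apply_eq_zero_of_comp_eq_zero (hφker t ht) hε.ne' (hode t ht), add_zero, ← hψ t ht,
      comp_apply_eq_smul_of_smul_eq (hode t ht)] at h
  have hsub : uIcc 0 s ⊆ Icc (0:ℝ) 1 := by
    rw [uIcc_of_le hs.1]
    exact Icc_subset_Icc le_rfl hs.2
  have hint : IntervalIntegrable (fun t => ψ t (x' t)) volume 0 s :=
    ((hψcont.clm_apply hx'cont).mono hsub).intervalIntegrable
  rw [← intervalIntegral.integral_smul,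
    intervalIntegral.integral_eq_sub_of_hasDerivAt (fun t ht => hderiv t (hsub ht)) (hint.smul ε)]

/-- **Adiabatic invariants, integral identity.**  Let `L s` be a
norm-continuous family of bounded operators on a complex Banach space `B` and `ε > 0`.
If `φ : [0,1] → B*` is `C¹` with `L(s)* φ(s) = 0` and `ψ : [0,1] → B*` is continuous with
`L(s)* ψ(s) = φ̇(s)`, then every `C¹` solution of `ε ẋ = L(s) x` satisfies
`⟨φ(s), x(s)⟩ − ⟨φ(0), x(0)⟩ = ε ∫₀ˢ ⟨ψ(s'), ẋ(s')⟩ ds'` for all `s ∈ [0,1]`.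
(Here the adjoint acts by `L* φ = φ ∘ L`.) -/
theorem adiabatic_invariant_integral_identity
    {B : Type*} [NormedAddCommGroup B] [NormedSpace ℂ B] [CompleteSpace B]
    (L : ℝ → B →L[ℂ] B) (hLcont : ContinuousOn L (Icc (0:ℝ) 1))
    (ε : ℝ) (hε : 0 < ε)
    (φ φ' ψ : ℝ → B →L[ℂ] ℂ)
    -- `φ` is `C¹` with derivative `φ'`
    (hφ' : ∀ s ∈ Icc (0:ℝ) 1, HasDerivAt φ (φ' s) s)
    (hφ'cont : ContinuousOn φ' (Icc (0:ℝ) 1))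
    -- `φ(s) ∈ ker L(s)*`
    (hφker : ∀ s ∈ Icc (0:ℝ) 1, (φ s).comp (L s) = 0)
    -- `ψ` is continuous with `L(s)* ψ(s) = φ̇(s)`
    (hψcont : ContinuousOn ψ (Icc (0:ℝ) 1))
    (hψ : ∀ s ∈ Icc (0:ℝ) 1, (ψ s).comp (L s) = φ' s)
    -- `x` is a `C¹` solution of `ε ẋ = L(s) x`
    (x x' : ℝ → B)
    (hx' : ∀ s ∈ Icc (0:ℝ) 1, HasDerivAt x (x' s) s)
    (hx'cont : ContinuousOn x' (Icc (0:ℝ) 1))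
    (hode : ∀ s ∈ Icc (0:ℝ) 1, ε • x' s = L s (x s)) :
    ∀ s ∈ Icc (0:ℝ) 1,
      φ s (x s) - φ 0 (x 0) = ε • ∫ t in (0:ℝ)..s, ψ t (x' t) :=
  adiabatic_invariant_integral_identity_general L ε hε φ φ' ψ hφ' hφker hψcont hψ x x' hx' hx'cont
    hode
end

section
/- Complementarity in the gapped case. Let B be a complex Banach space and L a closed, densely defined operator on B satisfying the Hille–Yosida conditions for generators of contraction semigroups: every γ > 0 lies in the resolvent set of L and ‖(L − γ)x‖ ≥ γ‖x‖ for all x in the domain. Assume in addition that L is semi-Fredholm: ran L is closed and at least one of dim ker L and dim(B / ran L) is finite. Then ker L and ran L are complementary closed subspaces, B = ker L ⊕ ran L, and L is Fredholm of index zero: dim ker L = dim(B / ran L) < ∞. -/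
/-!
Dissipativity forces `ker L ∩ ran L = 0`: if `L u = d` with `L d = 0`, then `z = u + γ⁻¹ d` solves
`(L - γ) z = -γ u`, so `‖z‖ ≤ ‖u‖` and `‖d‖ = γ ‖z - u‖ ≤ 2 γ ‖u‖` for every `γ > 0`.
For the sum, solve `(L - γ) x = y`. Since `L` is closed with closed range, the open mapping theorem
splits `x = k + v` with `k ∈ ker L` and `‖v‖ ≤ 2 C ‖y‖`, so `y - (L v - γ k) = -γ v → 0` and `y` lies
in the closure of `ker L + ran L`. That sum is closed, being the preimage of a finite-dimensional
subspace of `B ⧸ ran L`; the complement then identifies `ker L` with `B ⧸ ran L`.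
-/

open Filter Topology

theorem mem_closure_of_forall_pos_exists_norm_sub_le {E : Type*} [SeminormedAddCommGroup E]
    {s : Set E} {y : E} {M : ℝ} (h : ∀ γ : ℝ, 0 < γ → ∃ w ∈ s, ‖y - w‖ ≤ γ * M) :
    y ∈ closure s := by
  refine Metric.mem_closure_iff.mpr fun ε hε => ?_
  obtain ⟨w, hw, hyw⟩ := h (ε / (|M| + 1)) (by positivity)
  refine ⟨w, hw, ?_⟩
  calc dist y w ≤ ε / (|M| + 1) * |M| := by
        rw [dist_eq_norm]; exact hyw.trans (by gcongr; exact le_abs_self M)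
    _ < ε := by
        rw [div_mul_eq_mul_div, div_lt_iff₀ (by positivity)]; nlinarith

theorem Submodule.isClosed_sup_of_finiteDimensional {𝕜 E : Type*} [NontriviallyNormedField 𝕜]
    [CompleteSpace 𝕜] [NormedAddCommGroup E] [NormedSpace 𝕜 E] {K R : Submodule 𝕜 E}
    (hR : IsClosed (R : Set E)) (hfin : FiniteDimensional 𝕜 K ∨ FiniteDimensional 𝕜 (E ⧸ R)) :
    IsClosed ((K ⊔ R : Submodule 𝕜 E) : Set E) := by
  have : IsClosed (R : Set E) := hR -- makes `E ⧸ R` Hausdorff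
  have : FiniteDimensional 𝕜 (K.map R.mkQ) := hfin.elim (fun _ => Module.Finite.map _ _)
    fun _ => FiniteDimensional.finiteDimensional_submodule _
  rw [sup_comm, ← Submodule.comap_map_mkQ]
  exact ((K.map R.mkQ).closed_of_finiteDimensional).preimage R.continuous_mkQ

namespace LinearPMap

section Closed

variable {R E F : Type*} [CommRing R] [AddCommGroup E] [Module R E] [TopologicalSpace E]
  [AddCommGroup F] [Module R F] [TopologicalSpace F]

theorem IsClosed.isClosed_ker_map_subtype {f : E →ₗ.[R] F} (hf : f.IsClosed) :
    _root_.IsClosed (((LinearMap.ker f.toFun).map f.domain.subtype : Submodule R E) : Set E) := by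
  have hker : (((LinearMap.ker f.toFun).map f.domain.subtype : Submodule R E) : Set E) =
      (fun x : E => (x, (0 : F))) ⁻¹' f.graph := by
    ext x
    simp only [SetLike.mem_coe, Submodule.mem_map, LinearMap.mem_ker, Submodule.subtype_apply,
      Set.mem_preimage, mem_graph_iff]
    exact ⟨fun ⟨d, h0, hx⟩ => ⟨d, hx, h0⟩, fun ⟨d, hx, h0⟩ => ⟨d, h0, hx⟩⟩
  rw [hker]
  exact hf.preimage (continuous_id.prodMk continuous_const)

end Closed

section OpenMapping

variable {𝕜 E F : Type*} [NontriviallyNormedField 𝕜]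
  [NormedAddCommGroup E] [NormedSpace 𝕜 E] [CompleteSpace E]
  [NormedAddCommGroup F] [NormedSpace 𝕜 F] [CompleteSpace F]

theorem IsClosed.exists_preimage_norm_le {f : E →ₗ.[𝕜] F} (hf : f.IsClosed)
    (hrange : _root_.IsClosed (LinearMap.range f.toFun : Set F)) :
    ∃ C > 0, ∀ u : f.domain, ∃ v : f.domain, f v = f u ∧ ‖(v : E)‖ ≤ C * ‖f u‖ := by
  have : CompleteSpace f.graph := hf.completeSpace_coe
  have : CompleteSpace (LinearMap.range f.toFun) := hrange.completeSpace_coe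
  let φ : f.graph →L[𝕜] LinearMap.range f.toFun :=
    ((ContinuousLinearMap.snd 𝕜 E F).comp f.graph.subtypeL).codRestrict _ fun g => by
      obtain ⟨v, -, hv⟩ := (mem_graph_iff f).mp g.2
      exact ⟨v, hv⟩
  have hφ : Function.Surjective φ := by
    rintro ⟨_, u, rfl⟩
    exact ⟨⟨_, mem_graph f u⟩, rfl⟩
  obtain ⟨C, hC0, hC⟩ := φ.exists_preimage_norm_le hφ
  refine ⟨C, hC0, fun u => ?_⟩
  obtain ⟨g, hgu, hg⟩ := hC ⟨f u, u, rfl⟩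
  obtain ⟨v, hv1, hv2⟩ := (mem_graph_iff f).mp g.2
  refine ⟨v, hv2.trans (congrArg Subtype.val hgu), ?_⟩
  calc ‖(v : E)‖ = ‖(g : E × F).1‖ := by rw [hv1]
    _ ≤ ‖g‖ := norm_fst_le _
    _ ≤ C * ‖f u‖ := hg

end OpenMapping

section Dissipative

variable {E : Type*} [NormedAddCommGroup E] [NormedSpace ℂ E]

def IsDissipative (f : E →ₗ.[ℂ] E) : Prop :=
  ∀ γ : ℝ, 0 < γ → ∀ x : f.domain, γ * ‖(x : E)‖ ≤ ‖f x - γ • (x : E)‖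

variable {f : E →ₗ.[ℂ] E}

theorem IsDissipative.norm_le_of_mem_ker (hf : f.IsDissipative) {d u : f.domain}
    (hd : f d = 0) (hu : f u = d) {γ : ℝ} (hγ : 0 < γ) : ‖(d : E)‖ ≤ 2 * γ * ‖(u : E)‖ := by
  set z : f.domain := u + γ⁻¹ • d
  have hz : (z : E) = u + γ⁻¹ • (d : E) := rfl
  have hdz : (d : E) = γ • ((z : E) - u) := by
    rw [hz, add_sub_cancel_left, smul_smul, mul_inv_cancel₀ hγ.ne', one_smul]
  have hfz : f z - γ • (z : E) = -(γ • (u : E)) := by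
    have : f z = d := by
      rw [f.map_add, ← Complex.coe_smul, f.map_smul, hd, smul_zero, add_zero, hu]
    rw [this, hdz]
    simp only [smul_sub]
    abel
  have hzu : ‖(z : E)‖ ≤ ‖(u : E)‖ := by
    have := hf γ hγ z
    rw [hfz, norm_neg, norm_smul, Real.norm_of_nonneg hγ.le] at this
    exact le_of_mul_le_mul_left this hγ
  calc ‖(d : E)‖ = γ * ‖(z : E) - u‖ := by rw [hdz, norm_smul, Real.norm_of_nonneg hγ.le]
    _ ≤ γ * (‖(z : E)‖ + ‖(u : E)‖) := by gcongr; exact norm_sub_le _ _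
    _ ≤ 2 * γ * ‖(u : E)‖ := by nlinarith

theorem IsDissipative.disjoint_ker_range (hf : f.IsDissipative) :
    Disjoint ((LinearMap.ker f.toFun).map f.domain.subtype) (LinearMap.range f.toFun) := by
  rw [Submodule.disjoint_def]
  rintro _ ⟨d, hd, rfl⟩ ⟨u, hu⟩
  have hlim : Tendsto (fun γ : ℝ => 2 * γ * ‖(u : E)‖) (𝓝[>] 0) (𝓝 0) := by
    have : Continuous (fun γ : ℝ => 2 * γ * ‖(u : E)‖) := by fun_prop
    simpa using (this.tendsto 0).mono_left nhdsWithin_le_nhds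
  have hle : ‖(d : E)‖ ≤ 0 := ge_of_tendsto hlim <| eventually_nhdsWithin_of_forall
    fun γ hγ => hf.norm_le_of_mem_ker hd hu hγ
  exact norm_le_zero_iff.mp hle

theorem IsDissipative.exists_mem_ker_sup_range_norm_sub_le (hf : f.IsDissipative)
    (hsurj : ∀ γ : ℝ, 0 < γ → ∀ y : E, ∃ x : f.domain, f x - γ • (x : E) = y)
    {C : ℝ} (hC0 : 0 ≤ C)
    (hC : ∀ u : f.domain, ∃ v : f.domain, f v = f u ∧ ‖(v : E)‖ ≤ C * ‖f u‖)
    (y : E) {γ : ℝ} (hγ : 0 < γ) :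
    ∃ w ∈ (LinearMap.ker f.toFun).map f.domain.subtype ⊔ LinearMap.range f.toFun,
      ‖y - w‖ ≤ γ * (2 * C * ‖y‖) := by
  obtain ⟨x, hx⟩ := hsurj γ hγ y
  have hγx : ‖γ • (x : E)‖ ≤ ‖y‖ := by
    rw [norm_smul, Real.norm_of_nonneg hγ.le, ← hx]; exact hf γ hγ x
  have hfx : ‖f x‖ ≤ 2 * ‖y‖ := by
    calc ‖f x‖ = ‖y + γ • (x : E)‖ := by rw [← hx, sub_add_cancel]
      _ ≤ ‖y‖ + ‖γ • (x : E)‖ := norm_add_le _ _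
      _ ≤ 2 * ‖y‖ := by linarith
  obtain ⟨v, hfv, hv⟩ := hC x
  have hk : ((x - v : f.domain) : E) ∈ (LinearMap.ker f.toFun).map f.domain.subtype :=
    ⟨x - v, (f.map_sub x v).trans (sub_eq_zero.mpr hfv.symm), rfl⟩
  refine ⟨-(γ • ((x - v : f.domain) : E)) + f v,
    Submodule.add_mem_sup (Submodule.neg_mem _ (Submodule.smul_of_tower_mem _ γ hk)) ⟨v, rfl⟩, ?_⟩
  have hyw : y - (-(γ • ((x - v : f.domain) : E)) + f v) = -(γ • (v : E)) := by
    rw [← hx, hfv, Submodule.coe_sub, smul_sub]; abel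
  calc ‖y - (-(γ • ((x - v : f.domain) : E)) + f v)‖ = γ * ‖(v : E)‖ := by
        rw [hyw, norm_neg, norm_smul, Real.norm_of_nonneg hγ.le]
    _ ≤ γ * (C * (2 * ‖y‖)) := by gcongr; exact hv.trans (by gcongr)
    _ = γ * (2 * C * ‖y‖) := by ring

theorem IsDissipative.ker_sup_range_eq_top [CompleteSpace E] (hf : f.IsDissipative)
    (hclosed : f.IsClosed)
    (hsurj : ∀ γ : ℝ, 0 < γ → ∀ y : E, ∃ x : f.domain, f x - γ • (x : E) = y)
    (hrange : _root_.IsClosed (LinearMap.range f.toFun : Set E))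
    (hfin : FiniteDimensional ℂ (LinearMap.ker f.toFun) ∨
      FiniteDimensional ℂ (E ⧸ LinearMap.range f.toFun)) :
    (LinearMap.ker f.toFun).map f.domain.subtype ⊔ LinearMap.range f.toFun = ⊤ := by
  obtain ⟨C, hC0, hC⟩ := hclosed.exists_preimage_norm_le hrange
  have hsup := Submodule.isClosed_sup_of_finiteDimensional hrange <| hfin.imp_left
    fun (_ : FiniteDimensional ℂ (LinearMap.ker f.toFun)) =>
      Module.Finite.map (LinearMap.ker f.toFun) f.domain.subtype
  refine Submodule.eq_top_iff'.mpr fun y => hsup.closure_subset ?_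
  exact mem_closure_of_forall_pos_exists_norm_sub_le fun γ hγ =>
    hf.exists_mem_ker_sup_range_norm_sub_le hsurj hC0.le hC y hγ

end Dissipative

end LinearPMap

noncomputable def LinearMap.kerEquivQuotientRangeOfIsCompl {R M : Type*} [Ring R]
    [AddCommGroup M] [Module R M] {p : Submodule R M} (L : p →ₗ[R] M)
    (h : IsCompl ((LinearMap.ker L).map p.subtype) (LinearMap.range L)) :
    LinearMap.ker L ≃ₗ[R] M ⧸ LinearMap.range L :=
  (Submodule.equivMapOfInjective _ p.injective_subtype _).trans
    (Submodule.quotientEquivOfIsCompl _ _ h.symm).symm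

theorem gapped_complementarity_general
    {B : Type*} [NormedAddCommGroup B] [NormedSpace ℂ B] [CompleteSpace B]
    (D : Subspace ℂ B) (L : D →ₗ[ℂ] B)
    -- `L` is densely defined and closed
    (hclosed : IsClosed {p : B × B | ∃ x : D, (x : B) = p.1 ∧ L x = p.2})
    -- Hille–Yosida conditions: dissipativity and `(0,∞)` in the resolvent set
    (hdiss : ∀ γ : ℝ, 0 < γ → ∀ x : D, γ * ‖(x : B)‖ ≤ ‖L x - γ • (x : B)‖)
    (hsurj : ∀ γ : ℝ, 0 < γ → ∀ y : B, ∃ x : D, L x - γ • (x : B) = y)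
    -- `L` is semi-Fredholm
    (hranClosed : IsClosed ((LinearMap.range L : Submodule ℂ B) : Set B))
    (hsemiFred : FiniteDimensional ℂ (LinearMap.ker L) ∨
      FiniteDimensional ℂ (B ⧸ LinearMap.range L)) :
    IsClosed (((LinearMap.ker L).map D.subtype : Submodule ℂ B) : Set B) ∧
    IsCompl ((LinearMap.ker L).map D.subtype) (LinearMap.range L) ∧
    FiniteDimensional ℂ (LinearMap.ker L) ∧
    FiniteDimensional ℂ (B ⧸ LinearMap.range L) ∧
    Module.finrank ℂ (LinearMap.ker L) = Module.finrank ℂ (B ⧸ LinearMap.range L) := by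
  set f : B →ₗ.[ℂ] B := ⟨D, L⟩
  have hf : f.IsClosed := by
    change IsClosed (f.graph : Set (B × B))
    convert hclosed using 1
    exact Set.ext fun p => LinearPMap.mem_graph_iff f
  have hdiss : f.IsDissipative := hdiss
  have hcompl : IsCompl ((LinearMap.ker L).map D.subtype) (LinearMap.range L) :=
    ⟨hdiss.disjoint_ker_range,
      codisjoint_iff.mpr <| hdiss.ker_sup_range_eq_top hf hsurj hranClosed hsemiFred⟩
  let e := L.kerEquivQuotientRangeOfIsCompl hcompl
  have hker : FiniteDimensional ℂ (LinearMap.ker L) :=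
    hsemiFred.elim id fun _ => Module.Finite.equiv e.symm
  exact ⟨hf.isClosed_ker_map_subtype, hcompl, hker, Module.Finite.equiv e, e.finrank_eq⟩

/-- **Complementarity in the gapped case.**  Let `L` be a closed, densely
defined operator on a complex Banach space `B` satisfying the Hille–Yosida conditions for
generators of contraction semigroups (every `γ > 0` is in the resolvent set and
`‖(L − γ)x‖ ≥ γ‖x‖`), and assume `L` is semi-Fredholm (`ran L` closed and `ker L` or
`B ⧸ ran L` finite dimensional).  Then `ker L` and `ran L` are complementary closed
subspaces, `B = ker L ⊕ ran L`, and `L` is Fredholm of index zero: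
`dim ker L = dim (B ⧸ ran L) < ∞`. -/
theorem gapped_complementarity
    {B : Type*} [NormedAddCommGroup B] [NormedSpace ℂ B] [CompleteSpace B]
    (D : Subspace ℂ B) (L : D →ₗ[ℂ] B)
    -- `L` is densely defined and closed
    (hdense : Dense (D : Set B))
    (hclosed : IsClosed {p : B × B | ∃ x : D, (x : B) = p.1 ∧ L x = p.2})
    -- Hille–Yosida conditions: dissipativity and `(0,∞)` in the resolvent set
    (hdiss : ∀ γ : ℝ, 0 < γ → ∀ x : D, γ * ‖(x : B)‖ ≤ ‖L x - γ • (x : B)‖)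
    (hsurj : ∀ γ : ℝ, 0 < γ → ∀ y : B, ∃ x : D, L x - γ • (x : B) = y)
    -- `L` is semi-Fredholm
    (hranClosed : IsClosed ((LinearMap.range L : Submodule ℂ B) : Set B))
    (hsemiFred : FiniteDimensional ℂ (LinearMap.ker L) ∨
      FiniteDimensional ℂ (B ⧸ LinearMap.range L)) :
    IsClosed (((LinearMap.ker L).map D.subtype : Submodule ℂ B) : Set B) ∧
    IsCompl ((LinearMap.ker L).map D.subtype) (LinearMap.range L) ∧
    FiniteDimensional ℂ (LinearMap.ker L) ∧
    FiniteDimensional ℂ (B ⧸ LinearMap.range L) ∧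
    Module.finrank ℂ (LinearMap.ker L) = Module.finrank ℂ (B ⧸ LinearMap.range L) :=
  gapped_complementarity_general D L hclosed hdiss hsurj hranClosed hsemiFred
end

section
/- Characterization of the closure of the range. Let B be a complex Banach space and L a closed, densely defined operator on B satisfying the Hille–Yosida conditions for generators of contraction semigroups: every γ > 0 lies in the resolvent set of L and ‖(L − γ)x‖ ≥ γ‖x‖ for all x in the domain (equivalently ‖γ(L − γ)⁻¹‖ ≤ 1 for all γ > 0). Then for every b ∈ B: b ∈ closure(ran L) if and only if γ(L − γ)⁻¹ b → 0 in norm as γ ↓ 0. -/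
/-!
For `γ > 0` the operators `γ (L − γ)⁻¹` are contractions, so the set of `b` with
`γ (L − γ)⁻¹ b → 0` is closed. It contains `ran L`, because
`γ (L − γ)⁻¹ L x = γ x + γ · γ (L − γ)⁻¹ x` has norm at most `2γ‖x‖`.
Conversely `b = L (L − γ)⁻¹ b − γ (L − γ)⁻¹ b`, so `b` is a limit of elements of `ran L`
as soon as `γ (L − γ)⁻¹ b → 0`.
-/

open Filter Set Topology
open scoped NNReal

theorem isClosed_setOf_tendsto_of_eventually_lipschitzWith {ι X Y : Type*}
    [PseudoMetricSpace X] [PseudoMetricSpace Y] {F : ι → X → Y} {l : Filter ι} {K : ℝ≥0}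
    (hF : ∀ᶠ i in l, LipschitzWith K (F i)) (z : Y) :
    IsClosed {x | Tendsto (F · x) l (𝓝 z)} := by
  refine closure_subset_iff_isClosed.mp fun x hx => Metric.tendsto_nhds.mpr fun ε hε => ?_
  obtain ⟨y, hy, hxy⟩ := Metric.mem_closure_iff.mp hx (ε / 2 / (K + 1)) (by positivity)
  have hKxy : K * dist x y < ε / 2 := by
    calc (K : ℝ) * dist x y ≤ (K + 1) * dist x y := by gcongr; linarith
      _ < (K + 1) * (ε / 2 / (K + 1)) := by gcongr
      _ = ε / 2 := by field_simp
  filter_upwards [hF, Metric.tendsto_nhds.mp hy (ε / 2) (half_pos hε)] with i hFi hyi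
  calc dist (F i x) z ≤ dist (F i x) (F i y) + dist (F i y) z := dist_triangle _ _ _
    _ ≤ K * dist x y + dist (F i y) z := by gcongr; exact hFi.dist_le_mul x y
    _ < ε := by linarith

section Resolvent

variable {B : Type*} [NormedAddCommGroup B] [NormedSpace ℂ B] {D : Subspace ℂ B}
  {L : D →ₗ[ℂ] B} {R : ℝ → B →L[ℂ] B} {γ : ℝ}

theorem norm_smul_resolvent_apply_le
    (hdiss : ∀ x : D, γ * ‖(x : B)‖ ≤ ‖L x - γ • (x : B)‖) (hγ : 0 < γ)
    (hmem : ∀ y : B, R γ y ∈ D)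
    (hright : ∀ y : B, ∀ h : R γ y ∈ D, L ⟨R γ y, h⟩ - γ • R γ y = y) (y : B) :
    ‖γ • R γ y‖ ≤ ‖y‖ := by
  have h := hdiss ⟨R γ y, hmem y⟩
  rw [hright y (hmem y)] at h
  rwa [norm_smul, Real.norm_of_nonneg hγ.le]

theorem resolvent_apply_eq_add (hleft : ∀ x : D, R γ (L x - γ • (x : B)) = (x : B)) (x : D) :
    R γ (L x) = x + γ • R γ x := by
  calc R γ (L x) = R γ (L x - γ • (x : B)) + γ • R γ x := by
        rw [map_sub, (R γ).map_smul_of_tower, sub_add_cancel]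
    _ = x + γ • R γ x := by rw [hleft x]

theorem tendsto_smul_resolvent_apply_range
    (hleft : ∀ γ : ℝ, 0 < γ → ∀ x : D, R γ (L x - γ • (x : B)) = (x : B))
    (hcontr : ∀ γ : ℝ, 0 < γ → ∀ y : B, ‖γ • R γ y‖ ≤ ‖y‖) (x : D) :
    Tendsto (fun γ : ℝ => γ • R γ (L x)) (𝓝[>] 0) (𝓝 0) := by
  have hbound : ∀ᶠ γ in 𝓝[>] (0 : ℝ), ‖γ • R γ (L x)‖ ≤ γ * (2 * ‖(x : B)‖) := by
    filter_upwards [self_mem_nhdsWithin] with γ (hγ : 0 < γ)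
    calc ‖γ • R γ (L x)‖ = γ * ‖(x : B) + γ • R γ x‖ := by
          rw [resolvent_apply_eq_add (hleft γ hγ), norm_smul, Real.norm_of_nonneg hγ.le]
      _ ≤ γ * (‖(x : B)‖ + ‖(x : B)‖) := by
          gcongr; exact norm_add_le_of_le le_rfl (hcontr γ hγ x)
      _ = γ * (2 * ‖(x : B)‖) := by ring
  refine squeeze_zero_norm' hbound ?_
  exact ((continuous_mul_const _).tendsto' 0 0 (zero_mul _)).mono_left nhdsWithin_le_nhds

theorem mem_closure_range_of_tendsto_smul_resolvent
    (hmem : ∀ γ : ℝ, 0 < γ → ∀ y : B, R γ y ∈ D)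
    (hright : ∀ γ : ℝ, 0 < γ → ∀ y : B, ∀ h : R γ y ∈ D, L ⟨R γ y, h⟩ - γ • R γ y = y) {b : B}
    (hb : Tendsto (fun γ : ℝ => γ • R γ b) (𝓝[>] 0) (𝓝 0)) :
    b ∈ closure (LinearMap.range L : Set B) := by
  refine mem_closure_of_tendsto (f := fun γ : ℝ => b + γ • R γ b) (by simpa using hb.const_add b) ?_
  filter_upwards [self_mem_nhdsWithin] with γ (hγ : 0 < γ)
  exact ⟨⟨R γ b, hmem γ hγ b⟩, sub_eq_iff_eq_add.mp (hright γ hγ b (hmem γ hγ b))⟩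

end Resolvent

theorem range_closure_characterization_general
    {B : Type*} [NormedAddCommGroup B] [NormedSpace ℂ B]
    (D : Subspace ℂ B) (L : D →ₗ[ℂ] B)
    -- Hille–Yosida dissipativity condition
    (hdiss : ∀ γ : ℝ, 0 < γ → ∀ x : D, γ * ‖(x : B)‖ ≤ ‖L x - γ • (x : B)‖)
    -- `R γ` is the bounded inverse of `L − γ` for every `γ > 0`
    (R : ℝ → B →L[ℂ] B)
    (hmem : ∀ γ : ℝ, 0 < γ → ∀ y : B, R γ y ∈ D)
    (hleft : ∀ γ : ℝ, 0 < γ → ∀ x : D, R γ (L x - γ • (x : B)) = (x : B))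
    (hright : ∀ γ : ℝ, 0 < γ → ∀ y : B, ∀ h : R γ y ∈ D,
      L ⟨R γ y, h⟩ - γ • R γ y = y) :
    ∀ b : B, b ∈ closure ((LinearMap.range L : Submodule ℂ B) : Set B) ↔
      Tendsto (fun γ : ℝ => γ • R γ b) (nhdsWithin 0 (Ioi 0)) (nhds 0) := by
  have hcontr : ∀ γ : ℝ, 0 < γ → ∀ y : B, ‖γ • R γ y‖ ≤ ‖y‖ := fun γ hγ =>
    norm_smul_resolvent_apply_le (hdiss γ hγ) hγ (hmem γ hγ) (hright γ hγ)
  have hlip : ∀ᶠ γ in 𝓝[>] (0 : ℝ), LipschitzWith 1 (γ • R γ) := by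
    filter_upwards [self_mem_nhdsWithin] with γ (hγ : 0 < γ)
    exact Real.toNNReal_one ▸ AddMonoidHomClass.lipschitz_of_bound _ 1 fun y => by
      simpa using hcontr γ hγ y
  intro b
  refine ⟨fun hb => ?_, mem_closure_range_of_tendsto_smul_resolvent hmem hright⟩
  refine closure_minimal ?_ (isClosed_setOf_tendsto_of_eventually_lipschitzWith hlip 0) hb
  rintro _ ⟨x, rfl⟩
  exact tendsto_smul_resolvent_apply_range hleft hcontr x

/-- **Characterization of the closure of the range.**  Let `L` be a closed,
densely defined operator on a complex Banach space `B` satisfying the Hille–Yosida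
conditions, with bounded resolvents `R γ = (L − γ)⁻¹` for `γ > 0`.  Then for every `b ∈ B`,
`b ∈ closure (ran L)` if and only if `γ (L − γ)⁻¹ b → 0` in norm as `γ ↓ 0`. -/
theorem range_closure_characterization
    {B : Type*} [NormedAddCommGroup B] [NormedSpace ℂ B] [CompleteSpace B]
    (D : Subspace ℂ B) (L : D →ₗ[ℂ] B)
    -- `L` is densely defined and closed
    (hdense : Dense (D : Set B))
    (hclosed : IsClosed {p : B × B | ∃ x : D, (x : B) = p.1 ∧ L x = p.2})
    -- Hille–Yosida dissipativity condition
    (hdiss : ∀ γ : ℝ, 0 < γ → ∀ x : D, γ * ‖(x : B)‖ ≤ ‖L x - γ • (x : B)‖)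
    -- `R γ` is the bounded inverse of `L − γ` for every `γ > 0`
    (R : ℝ → B →L[ℂ] B)
    (hmem : ∀ γ : ℝ, 0 < γ → ∀ y : B, R γ y ∈ D)
    (hleft : ∀ γ : ℝ, 0 < γ → ∀ x : D, R γ (L x - γ • (x : B)) = (x : B))
    (hright : ∀ γ : ℝ, 0 < γ → ∀ y : B, ∀ h : R γ y ∈ D,
      L ⟨R γ y, h⟩ - γ • R γ y = y) :
    ∀ b : B, b ∈ closure ((LinearMap.range L : Submodule ℂ B) : Set B) ↔
      Tendsto (fun γ : ℝ => γ • R γ b) (nhdsWithin 0 (Ioi 0)) (nhds 0) :=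
  range_closure_characterization_general D L hdiss R hmem hleft hright
end

section
/- Density of kernel plus range in the reflexive case. Let B be a reflexive complex Banach space and L a closed, densely defined operator on B satisfying the Hille–Yosida conditions for generators of contraction semigroups: every γ > 0 lies in the resolvent set of L and ‖(L − γ)x‖ ≥ γ‖x‖ for all x in the domain. Then ker L + ran L is dense in B: closure(ker L + ran L) = B. In particular, if ker L + closure(ran L) is closed, then B = ker L + closure(ran L). -/
/-!
For `x : B` and `γ > 0` put `w = -γ (L - γ)⁻¹ x`. Dissipativity gives `‖w‖ ≤ ‖x‖` and
`‖L w‖ ≤ 2γ‖x‖`, while `x - w = L (L - γ)⁻¹ x ∈ ran L`. In a reflexive space bounded sets are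
relatively weakly compact, so along an ultrafilter finer than `γ → 0⁺` (realised as
`γ = 1/(n+1)`) the `w` converge weakly to some `y`. The graph of `L` and `closure (ran L)` are
closed subspaces, hence weakly closed: `(y, 0)` lies in the graph, so `y ∈ ker L`, and
`x - y ∈ closure (ran L)`. Thus `B = ker L + closure (ran L)`, which is contained in
`closure (ker L + ran L)`.
-/

open Filter Topology NormedSpace

section WeakTopology

variable {𝕜 E F α : Type*} [RCLike 𝕜] [NormedAddCommGroup E] [NormedSpace 𝕜 E]
  [NormedAddCommGroup F] [NormedSpace 𝕜 F]

theorem IsClosed.toWeakSpace_image [NormedSpace ℝ E] [IsScalarTower ℝ 𝕜 E] {s : Set E}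
    (hs : Convex ℝ s) (hsc : IsClosed s) : IsClosed (toWeakSpace 𝕜 E '' s) := by
  have h := hs.toWeakSpace_closure 𝕜
  rw [hsc.closure_eq] at h
  exact h ▸ isClosed_closure

theorem Convex.mem_of_tendsto_toWeakSpace [NormedSpace ℝ E] [IsScalarTower ℝ 𝕜 E] {s : Set E}
    {l : Filter α} [l.NeBot] {u : α → E} {y : E} (hs : Convex ℝ s) (hsc : IsClosed s)
    (hu : ∀ᶠ a in l, u a ∈ s)
    (hlim : Tendsto (fun a => toWeakSpace 𝕜 E (u a)) l (𝓝 (toWeakSpace 𝕜 E y))) : y ∈ s := by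
  simpa using (hsc.toWeakSpace_image (𝕜 := 𝕜) hs).mem_of_tendsto hlim
    (hu.mono fun a ha => Set.mem_image_of_mem _ ha)

theorem Filter.Tendsto.toWeakSpace_prodMk {l : Filter α} {u : α → E} {v : α → F} {x : E} {y : F}
    (hu : Tendsto (fun a => toWeakSpace 𝕜 E (u a)) l (𝓝 (toWeakSpace 𝕜 E x)))
    (hv : Tendsto (fun a => toWeakSpace 𝕜 F (v a)) l (𝓝 (toWeakSpace 𝕜 F y))) :
    Tendsto (fun a => toWeakSpace 𝕜 (E × F) (u a, v a)) l
      (𝓝 (toWeakSpace 𝕜 (E × F) (x, y))) := by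
  have hsplit : ∀ (a : E) (b : F), toWeakSpace 𝕜 (E × F) (a, b) =
      WeakSpace.map (.inl 𝕜 E F) (toWeakSpace 𝕜 E a) +
        WeakSpace.map (.inr 𝕜 E F) (toWeakSpace 𝕜 F b) := fun a b => by
    rw [show (a, b) = ContinuousLinearMap.inl 𝕜 E F a + ContinuousLinearMap.inr 𝕜 E F b by simp,
      map_add]
    rfl
  simp only [hsplit]
  exact (((WeakSpace.map (ContinuousLinearMap.inl 𝕜 E F)).continuous.tendsto _).comp hu |>.add
    (((WeakSpace.map (ContinuousLinearMap.inr 𝕜 E F)).continuous.tendsto _).comp hv))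

theorem exists_tendsto_toWeakSpace_of_surjective_inclusionInDoubleDual
    (hrefl : Function.Surjective (inclusionInDoubleDual 𝕜 E)) (U : Ultrafilter α) {u : α → E}
    {C : ℝ} (hu : ∀ᶠ a in U, ‖u a‖ ≤ C) :
    ∃ y, Tendsto (fun a => toWeakSpace 𝕜 E (u a)) U (𝓝 (toWeakSpace 𝕜 E y)) := by
  set S := toWeakSpace 𝕜 E '' Metric.closedBall 0 C
  have hS : IsCompact (closure S) := by
    refine isCompact_closure_of_isBounded 𝕜 E S ?_ fun z _ => hrefl z
    rw [Set.preimage_image_eq _ (toWeakSpace 𝕜 E).injective]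
    exact Metric.isBounded_closedBall
  obtain ⟨y, -, hy⟩ := hS.ultrafilter_le_nhds (U.map fun a => toWeakSpace 𝕜 E (u a)) <| by
    refine le_principal_iff.2 (mem_map.2 ?_)
    filter_upwards [hu] with a ha
    exact subset_closure (Set.mem_image_of_mem _ (by simpa using ha))
  exact ⟨(toWeakSpace 𝕜 E).symm y, by simpa [Tendsto] using hy⟩

theorem LinearPMap.IsClosed.mem_graph_of_tendsto_toWeakSpace [NormedSpace ℝ E]
    [IsScalarTower ℝ 𝕜 E] [NormedSpace ℝ F] [IsScalarTower ℝ 𝕜 F]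
    {T : E →ₗ.[𝕜] F} (hT : T.IsClosed) {l : Filter α} [l.NeBot] {u : α → T.domain} {x : E} {y : F}
    (hu : Tendsto (fun a => toWeakSpace 𝕜 E (u a)) l (𝓝 (toWeakSpace 𝕜 E x)))
    (hTu : Tendsto (fun a => toWeakSpace 𝕜 F (T (u a))) l (𝓝 (toWeakSpace 𝕜 F y))) :
    (x, y) ∈ T.graph :=
  (T.graph.restrictScalars ℝ).convex.mem_of_tendsto_toWeakSpace hT
    (Eventually.of_forall fun a => T.mem_graph (u a)) (hu.toWeakSpace_prodMk hTu)

end WeakTopology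

section HilleYosida

variable {B : Type*} [NormedAddCommGroup B] [NormedSpace ℂ B] {D : Subspace ℂ B} {L : D →ₗ[ℂ] B}

theorem exists_norm_le_and_sub_mem_range_of_resolvent {γ : ℝ} (hγ : 0 ≤ γ) {x : B} {v : D}
    (hv : L v - γ • (v : B) = x) (hdiss : γ * ‖(v : B)‖ ≤ ‖L v - γ • (v : B)‖) :
    ∃ w : D, ‖(w : B)‖ ≤ ‖x‖ ∧ ‖L w‖ ≤ 2 * γ * ‖x‖ ∧ x - w ∈ LinearMap.range L := by
  have hw : ‖((-(γ • v) : D) : B)‖ ≤ ‖x‖ := by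
    rwa [Submodule.coe_neg, Submodule.coe_smul_of_tower, norm_neg, norm_smul,
      Real.norm_of_nonneg hγ, ← hv]
  have hxw : x - ((-(γ • v) : D) : B) = L v := by
    rw [← hv, Submodule.coe_neg, Submodule.coe_smul_of_tower]; abel
  refine ⟨-(γ • v), hw, ?_, ⟨v, hxw.symm⟩⟩
  calc ‖L (-(γ • v))‖ = γ * ‖x - ((-(γ • v) : D) : B)‖ := by
        rw [hxw, map_neg, norm_neg, LinearMap.map_smul_of_tower, norm_smul, Real.norm_of_nonneg hγ]
    _ ≤ γ * (‖x‖ + ‖x‖) := by gcongr; exact (norm_sub_le _ _).trans (by gcongr)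
    _ = 2 * γ * ‖x‖ := by ring

theorem LinearPMap.sup_topologicalClosure_range_eq_top
    (hrefl : Function.Surjective (inclusionInDoubleDual ℂ B))
    {T : B →ₗ.[ℂ] B} (hT : T.IsClosed)
    (hdiss : ∀ γ : ℝ, 0 < γ → ∀ x : T.domain, γ * ‖(x : B)‖ ≤ ‖T x - γ • (x : B)‖)
    (hsurj : ∀ γ : ℝ, 0 < γ → ∀ y : B, ∃ x : T.domain, T x - γ • (x : B) = y) :
    (LinearMap.ker T.toFun).map T.domain.subtype ⊔
      (LinearMap.range T.toFun).topologicalClosure = ⊤ := by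
  refine eq_top_iff.2 fun x _ => ?_
  have happrox (n : ℕ) : ∃ w : T.domain, ‖(w : B)‖ ≤ ‖x‖ ∧
      ‖T w‖ ≤ 2 * (1 / (n + 1 : ℝ)) * ‖x‖ ∧ x - w ∈ LinearMap.range T.toFun := by
    have hγ : (0 : ℝ) < 1 / (n + 1) := Nat.one_div_pos_of_nat
    obtain ⟨v, hv⟩ := hsurj _ hγ x
    exact exists_norm_le_and_sub_mem_range_of_resolvent hγ.le hv (hdiss _ hγ v)
  choose w hw_norm hTw hw_range using happrox
  let U := Ultrafilter.of (atTop : Filter ℕ)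
  obtain ⟨y, hy⟩ := exists_tendsto_toWeakSpace_of_surjective_inclusionInDoubleDual hrefl U
    (Eventually.of_forall hw_norm)
  have hTw0 : Tendsto (fun n => T (w n)) U (𝓝 0) := by
    refine (squeeze_zero_norm hTw ?_).mono_left (Ultrafilter.of_le _)
    simpa using (tendsto_one_div_add_atTop_nhds_zero_nat.const_mul 2).mul_const ‖x‖
  have hker : (y, 0) ∈ T.graph := hT.mem_graph_of_tendsto_toWeakSpace hy <| by
    simpa [Function.comp_def, toWeakSpaceCLM_eq_toWeakSpace] using
      ((toWeakSpaceCLM ℂ B).continuous.tendsto 0).comp hTw0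
  obtain ⟨z, hzy, hz0⟩ := (T.mem_graph_iff).1 hker
  have hrange : x - y ∈ (LinearMap.range T.toFun).topologicalClosure := by
    refine ((LinearMap.range T.toFun).topologicalClosure.restrictScalars ℝ).convex
      |>.mem_of_tendsto_toWeakSpace (𝕜 := ℂ) (l := U) (Submodule.isClosed_topologicalClosure _)
      (Eventually.of_forall fun n => Submodule.le_topologicalClosure _ (hw_range n)) ?_
    simpa using tendsto_const_nhds.sub hy
  rw [← add_sub_cancel y x]
  exact Submodule.add_mem_sup ⟨z, hz0, hzy⟩ hrange

end HilleYosida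

theorem kernel_plus_range_dense_reflexive_general
    {B : Type*} [NormedAddCommGroup B] [NormedSpace ℂ B]
    -- `B` is reflexive
    (hrefl : Function.Surjective (NormedSpace.inclusionInDoubleDual ℂ B))
    (D : Subspace ℂ B) (L : D →ₗ[ℂ] B)
    -- `L` is densely defined and closed
    (hclosed : IsClosed {p : B × B | ∃ x : D, (x : B) = p.1 ∧ L x = p.2})
    -- Hille–Yosida conditions: dissipativity and `(0,∞)` in the resolvent set
    (hdiss : ∀ γ : ℝ, 0 < γ → ∀ x : D, γ * ‖(x : B)‖ ≤ ‖L x - γ • (x : B)‖)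
    (hsurj : ∀ γ : ℝ, 0 < γ → ∀ y : B, ∃ x : D, L x - γ • (x : B) = y) :
    Dense ((((LinearMap.ker L).map D.subtype ⊔ LinearMap.range L : Submodule ℂ B)) : Set B) ∧
    (IsClosed ((((LinearMap.ker L).map D.subtype ⊔
          (LinearMap.range L).topologicalClosure : Submodule ℂ B)) : Set B) →
      (LinearMap.ker L).map D.subtype ⊔ (LinearMap.range L).topologicalClosure = ⊤) := by
  have hT : (LinearPMap.mk D L).IsClosed := by
    rw [LinearPMap.IsClosed]
    convert hclosed
    exact Set.ext fun p => LinearPMap.mem_graph_iff _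
  have htop := LinearPMap.sup_topologicalClosure_range_eq_top hrefl hT hdiss hsurj
  refine ⟨?_, fun _ => htop⟩
  rw [Submodule.dense_iff_topologicalClosure_eq_top, eq_top_iff, ← htop]
  exact sup_le (le_sup_left.trans (Submodule.le_topologicalClosure _))
    (Submodule.topologicalClosure_mono le_sup_right)

/-- **Density of kernel plus range in the reflexive case.**  Let `B` be a
reflexive complex Banach space and `L` a closed, densely defined operator on `B`
satisfying the Hille–Yosida conditions for generators of contraction semigroups.  Then
`ker L + ran L` is dense in `B`; in particular, if `ker L + closure (ran L)` is closed,
then `B = ker L + closure (ran L)`. -/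
theorem kernel_plus_range_dense_reflexive
    {B : Type*} [NormedAddCommGroup B] [NormedSpace ℂ B] [CompleteSpace B]
    -- `B` is reflexive
    (hrefl : Function.Surjective (NormedSpace.inclusionInDoubleDual ℂ B))
    (D : Subspace ℂ B) (L : D →ₗ[ℂ] B)
    -- `L` is densely defined and closed
    (hdense : Dense (D : Set B))
    (hclosed : IsClosed {p : B × B | ∃ x : D, (x : B) = p.1 ∧ L x = p.2})
    -- Hille–Yosida conditions: dissipativity and `(0,∞)` in the resolvent set
    (hdiss : ∀ γ : ℝ, 0 < γ → ∀ x : D, γ * ‖(x : B)‖ ≤ ‖L x - γ • (x : B)‖)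
    (hsurj : ∀ γ : ℝ, 0 < γ → ∀ y : B, ∃ x : D, L x - γ • (x : B) = y) :
    Dense ((((LinearMap.ker L).map D.subtype ⊔ LinearMap.range L : Submodule ℂ B)) : Set B) ∧
    (IsClosed ((((LinearMap.ker L).map D.subtype ⊔
          (LinearMap.range L).topologicalClosure : Submodule ℂ B)) : Set B) →
      (LinearMap.ker L).map D.subtype ⊔ (LinearMap.range L).topologicalClosure = ⊤) :=
  kernel_plus_range_dense_reflexive_general hrefl D L hclosed hdiss hsurj
end

section
/- Adiabatic expansion for driven Markov processes. Let d ≥ 1 and let L(s), 0 ≤ s ≤ 1, be a C³ family of real d×d matrices such that for each s: L_{ij}(s) ≥ 0 for i ≠ j and L_{jj}(s) = −Σ_{i≠j} L_{ij}(s) (columns sum to zero), and 0 is a simple eigenvalue of L(s) with a unique stationary probability distribution π(s) (π_i(s) ≥ 0, Σ_i π_i(s) = 1, L(s)π(s) = 0), depending C³ on s, with ker L(s) = span{π(s)} and ran L(s) = {p ∈ ℝ^d : Σ_i p_i = 0}. Let P(s) be the projection onto span{π(s)} along ran L(s) (explicitly P(s)_{ij} = π_i(s)) and let A(s) = L(s)⁻¹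 denote the reduced inverse, the unique matrix with A(s)L(s) = L(s)A(s) = 1 − P(s) and A(s)P(s) = P(s)A(s) = 0. Assume π̇(0) = 0. Then there is a constant C such that for all ε ∈ (0,1], the solution p_ε of ε ṗ(s) = L(s)p(s) with p(0) = π(0) satisfies ‖p_ε(s) − π(s) − ε A(s)π̇(s)‖ ≤ C ε² for all s ∈ [0,1]. -/
/-!
Write the solution as `p = π + ε y + ε² z + w` with `y = A π̇` and `z = A ẏ`. Since `A` inverts `L`
on vectors of zero sum, `L y = π̇` and `L z = ẏ`, so the remainder solves `ε ẇ = L w − ε³ ż`, and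
`w 0 = −ε² z 0` because `π̇ 0 = 0`. A Markov generator is dissipative for the `ℓ¹` norm: for small
`τ ≥ 0` the Euler step `1 + τ L` is column-stochastic. Hence `‖w s‖₁` grows at most like
`ε² ∫ ‖ż‖₁`, and `ż` is bounded because `A = (L + P)⁻¹ − P` is as smooth as `L` and `π`.
-/

open Set Finset Filter Topology Matrix

theorem tendsto_sub_nhdsGT_zero (s : ℝ) : Tendsto (fun ζ => ζ - s) (𝓝[>] s) (𝓝[>] 0) := by
  refine tendsto_nhdsWithin_of_tendsto_nhds_of_eventually_within _ ?_ ?_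
  · simpa using ((continuous_sub_right s).tendsto s).mono_left nhdsWithin_le_nhds
  · filter_upwards [self_mem_nhdsWithin] with ζ (hζ : s < ζ) using sub_pos.2 hζ

theorem norm_le_of_forward_step_le {E : Type*} [NormedAddCommGroup E] [NormedSpace ℝ E]
    {w w' : ℝ → E} {a b B : ℝ}
    (hw : ∀ s ∈ Icc a b, HasDerivWithinAt w (w' s) (Icc a b) s)
    (hstep : ∀ s ∈ Ico a b, ∀ᶠ h in 𝓝[>] 0, ‖w s + h • w' s‖ ≤ ‖w s‖ + h * B) :
    ∀ s ∈ Icc a b, ‖w s‖ ≤ ‖w a‖ + B * (s - a) := by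
  have hcont : ContinuousOn (fun s => ‖w s‖) (Icc a b) :=
    fun s hs => (hw s hs).continuousWithinAt.norm
  refine image_le_of_liminf_slope_right_le_deriv_boundary hcont (by simp)
    (by fun_prop) (fun s _ => ((hasDerivWithinAt_id s _).sub_const a).const_mul B |>.const_add _
      |>.congr_deriv (mul_one B)) ?_
  intro s hs r hr
  have hslope : Tendsto (slope w s) (𝓝[>] s) (𝓝 (w' s)) := by
    refine (hasDerivWithinAt_iff_tendsto_slope' (lt_irrefl s)).1 ?_
    exact (hw s (Ico_subset_Icc_self hs)).mono_of_mem_nhdsWithin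
      (Icc_mem_nhdsGT_of_mem hs)
  have hclose : ∀ᶠ ζ in 𝓝[>] s, ‖slope w s ζ - w' s‖ < r - B := by
    filter_upwards [hslope.eventually (Metric.ball_mem_nhds _ (sub_pos.2 hr))] with ζ hζ
    simpa [dist_eq_norm] using hζ
  refine Eventually.frequently ?_
  filter_upwards [hclose, (tendsto_sub_nhdsGT_zero s).eventually (hstep s hs),
    self_mem_nhdsWithin] with ζ hclose hstep (hζ : s < ζ)
  have hh : 0 < ζ - s := sub_pos.2 hζ
  have hsplit : w ζ = (w s + (ζ - s) • w' s) + (ζ - s) • (slope w s ζ - w' s) := by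
    rw [smul_sub, sub_smul_slope, vsub_eq_sub]; abel
  rw [slope_def_field, div_lt_iff₀ hh]
  calc ‖w ζ‖ - ‖w s‖
      ≤ ‖w s + (ζ - s) • w' s‖ + (ζ - s) * ‖slope w s ζ - w' s‖ - ‖w s‖ := by
        rw [hsplit]; gcongr
        exact (norm_add_le _ _).trans_eq (by rw [norm_smul, Real.norm_of_nonneg hh.le])
    _ < r * (ζ - s) := by nlinarith

variable {n : Type*} [Fintype n]

theorem norm_le_norm_toLp_one (x : n → ℝ) : ‖x‖ ≤ ‖WithLp.toLp 1 x‖ :=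
  (pi_norm_le_iff_of_nonneg (norm_nonneg _)).2 fun i => PiLp.norm_apply_le (WithLp.toLp 1 x) i

theorem norm_toLp_one_mulVec_le [DecidableEq n] {K : Matrix n n ℝ} (hK : K ∈ colStochastic ℝ n)
    (x : n → ℝ) : ‖WithLp.toLp 1 (K *ᵥ x)‖ ≤ ‖WithLp.toLp 1 x‖ := by
  simp only [PiLp.norm_eq_of_L1, Real.norm_eq_abs]
  calc ∑ i, |(K *ᵥ x) i| ≤ ∑ i, ∑ j, K i j * |x j| := by
        gcongr with i
        refine (abs_sum_le_sum_abs _ _).trans_eq (sum_congr rfl fun j _ => ?_)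
        rw [abs_mul, abs_of_nonneg (nonneg_of_mem_colStochastic hK)]
    _ = ∑ j, |x j| := by
        rw [sum_comm]
        simp [← sum_mul, sum_col_of_mem_colStochastic hK]

structure Matrix.IsMarkovGenerator (L : Matrix n n ℝ) : Prop where
  nonneg_of_ne : ∀ i j, i ≠ j → 0 ≤ L i j
  sum_col_eq_zero : ∀ j, ∑ i, L i j = 0

namespace Matrix.IsMarkovGenerator

variable {L : Matrix n n ℝ}

theorem smul (hL : L.IsMarkovGenerator) {c : ℝ} (hc : 0 ≤ c) : (c • L).IsMarkovGenerator where
  nonneg_of_ne i j hij := mul_nonneg hc (hL.nonneg_of_ne i j hij)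
  sum_col_eq_zero j := by simp [← mul_sum, hL.sum_col_eq_zero j]

theorem eventually_one_add_smul_mem_colStochastic [DecidableEq n] (hL : L.IsMarkovGenerator) :
    ∀ᶠ τ in 𝓝[>] (0:ℝ), 1 + τ • L ∈ colStochastic ℝ n := by
  have hdiag : ∀ i, ∀ᶠ τ in 𝓝[>] (0:ℝ), -1 < τ * L i i := fun i =>
    (((continuous_mul_const (L i i)).tendsto 0).mono_left nhdsWithin_le_nhds).eventually
      (lt_mem_nhds (by simp))
  filter_upwards [Filter.eventually_all.2 hdiag, self_mem_nhdsWithin] with τ hτ (hτ0 : 0 < τ)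
  refine mem_colStochastic_iff_sum.2 ⟨fun i j => ?_, fun j => ?_⟩
  · rcases eq_or_ne i j with rfl | hij
    · simp only [add_apply, one_apply_eq, smul_apply, smul_eq_mul]
      linarith [hτ i]
    · simpa [one_apply_ne hij] using mul_nonneg hτ0.le (hL.nonneg_of_ne i j hij)
  · simp [sum_add_distrib, ← mul_sum, hL.sum_col_eq_zero j, one_apply]

end Matrix.IsMarkovGenerator

theorem norm_toLp_one_le_of_hasDerivWithinAt_markov [DecidableEq n] {L : ℝ → Matrix n n ℝ}
    {w f : ℝ → n → ℝ} {a b B : ℝ}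
    (hL : ∀ s ∈ Ico a b, (L s).IsMarkovGenerator)
    (hw : ∀ s ∈ Icc a b, HasDerivWithinAt w (L s *ᵥ w s + f s) (Icc a b) s)
    (hf : ∀ s ∈ Ico a b, ‖WithLp.toLp 1 (f s)‖ ≤ B) :
    ∀ s ∈ Icc a b, ‖WithLp.toLp 1 (w s)‖ ≤ ‖WithLp.toLp 1 (w a)‖ + B * (s - a) := by
  let e := (PiLp.continuousLinearEquiv 1 ℝ (fun _ : n => ℝ)).symm
  refine norm_le_of_forward_step_le (w := fun s => e (w s))
    (fun s hs => e.hasFDerivAt.comp_hasDerivWithinAt s (hw s hs)) fun s hs => ?_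
  filter_upwards [(hL s hs).eventually_one_add_smul_mem_colStochastic, self_mem_nhdsWithin]
    with h hK (hh : 0 < h)
  have hsplit : w s + h • (L s *ᵥ w s + f s) = (1 + h • L s) *ᵥ w s + h • f s := by
    rw [add_mulVec, one_mulVec, smul_mulVec, smul_add, add_assoc]
  calc ‖e (w s) + h • e (L s *ᵥ w s + f s)‖
      = ‖WithLp.toLp 1 ((1 + h • L s) *ᵥ w s) + h • WithLp.toLp 1 (f s)‖ := by
        rw [← map_smul, ← map_add, hsplit]; rfl
    _ ≤ ‖WithLp.toLp 1 (w s)‖ + h * B := by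
        refine (norm_add_le _ _).trans (add_le_add (norm_toLp_one_mulVec_le hK _) ?_)
        rw [norm_smul, Real.norm_of_nonneg hh.le]
        exact mul_le_mul_of_nonneg_left (hf s hs) hh.le

theorem norm_toLp_one_adiabatic_remainder_le [DecidableEq n] {L : ℝ → Matrix n n ℝ}
    {π π' y y' z z' p : ℝ → n → ℝ} {a b ε Cz M : ℝ} (hε : 0 < ε)
    (hL : ∀ s ∈ Ico a b, (L s).IsMarkovGenerator)
    (hπ : ∀ s ∈ Icc a b, HasDerivWithinAt π (π' s) (Icc a b) s)
    (hy : ∀ s ∈ Icc a b, HasDerivWithinAt y (y' s) (Icc a b) s)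
    (hz : ∀ s ∈ Icc a b, HasDerivWithinAt z (z' s) (Icc a b) s)
    (hLπ : ∀ s ∈ Icc a b, L s *ᵥ π s = 0) (hLy : ∀ s ∈ Icc a b, L s *ᵥ y s = π' s)
    (hLz : ∀ s ∈ Icc a b, L s *ᵥ z s = y' s)
    (hp : ∀ s ∈ Icc a b, HasDerivWithinAt p (ε⁻¹ • L s *ᵥ p s) (Icc a b) s)
    (hp₀ : p a = π a + ε • y a)
    (hzC : ∀ s ∈ Icc a b, ‖WithLp.toLp 1 (z s)‖ ≤ Cz)
    (hz'M : ∀ s ∈ Ico a b, ‖WithLp.toLp 1 (z' s)‖ ≤ M) :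
    ∀ s ∈ Icc a b, ‖WithLp.toLp 1 (p s - π s - ε • y s)‖ ≤ (2 * Cz + M * (s - a)) * ε ^ 2 := by
  intro s hs
  set w : ℝ → n → ℝ := fun u => p u - π u - ε • y u - ε ^ 2 • z u
  have hw : ∀ u ∈ Icc a b,
      HasDerivWithinAt w ((ε⁻¹ • L u) *ᵥ w u + (-ε ^ 2) • z' u) (Icc a b) u := by
    intro u hu
    refine ((((hp u hu).sub (hπ u hu)).sub ((hy u hu).const_smul ε)).sub
      ((hz u hu).const_smul (ε ^ 2))).congr_deriv ?_
    simp only [w, smul_mulVec, mulVec_sub, mulVec_smul, hLπ u hu, hLy u hu, hLz u hu]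
    match_scalars <;> field_simp
  have hdiss := norm_toLp_one_le_of_hasDerivWithinAt_markov
    (fun u hu => (hL u hu).smul (inv_nonneg.2 hε.le)) hw (B := ε ^ 2 * M) (fun u hu => by
      rw [WithLp.toLp_smul, norm_smul, norm_neg, norm_pow, Real.norm_of_nonneg hε.le]
      exact mul_le_mul_of_nonneg_left (hz'M u hu) (by positivity)) s hs
  have hε2 : ‖(ε ^ 2 : ℝ)‖ = ε ^ 2 := Real.norm_of_nonneg (by positivity)
  have hwa : ‖WithLp.toLp 1 (w a)‖ ≤ ε ^ 2 * Cz := by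
    have hwa_eq : w a = -(ε ^ 2) • z a := by simp only [w, hp₀]; module
    rw [hwa_eq, WithLp.toLp_smul, norm_smul, norm_neg, hε2]
    exact mul_le_mul_of_nonneg_left (hzC a (left_mem_Icc.2 (hs.1.trans hs.2))) (by positivity)
  have hdecomp : p s - π s - ε • y s = w s + ε ^ 2 • z s := by simp only [w]; abel
  calc ‖WithLp.toLp 1 (p s - π s - ε • y s)‖
      ≤ ‖WithLp.toLp 1 (w s)‖ + ε ^ 2 * ‖WithLp.toLp 1 (z s)‖ := by
        rw [hdecomp, WithLp.toLp_add, WithLp.toLp_smul]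
        exact (norm_add_le _ _).trans_eq (by rw [norm_smul, hε2])
    _ ≤ ε ^ 2 * Cz + ε ^ 2 * M * (s - a) + ε ^ 2 * Cz := by
        gcongr
        · linarith
        · exact hzC s hs
    _ = (2 * Cz + M * (s - a)) * ε ^ 2 := by ring

section MatrixCalculus

variable {𝕜 : Type*} [NontriviallyNormedField 𝕜] {E : Type*} [NormedAddCommGroup E]
  [NormedSpace 𝕜 E] {M : E → Matrix n n 𝕜} {t : Set E} {k : WithTop ℕ∞}

theorem contDiffOn_det [DecidableEq n] (hM : ∀ i j, ContDiffOn 𝕜 k (fun x => M x i j) t) :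
    ContDiffOn 𝕜 k (fun x => (M x).det) t := by
  simp only [det_apply, Units.smul_def, zsmul_eq_mul]
  exact ContDiffOn.sum fun σ _ => contDiffOn_const.mul (contDiffOn_prod fun i _ => hM (σ i) i)

theorem contDiffOn_inv_apply [DecidableEq n] (hM : ∀ i j, ContDiffOn 𝕜 k (fun x => M x i j) t)
    (hdet : ∀ x ∈ t, (M x).det ≠ 0) (i j : n) :
    ContDiffOn 𝕜 k (fun x => (M x)⁻¹ i j) t := by
  have hadj : ContDiffOn 𝕜 k (fun x => (M x).adjugate i j) t := by
    simp only [adjugate_apply]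
    refine contDiffOn_det fun r c => ?_
    rcases eq_or_ne r j with rfl | hr
    · simpa [updateRow_apply] using contDiffOn_const
    · simpa [updateRow_apply, hr] using hM r c
  refine (((contDiffOn_det hM).inv hdet).mul hadj).congr fun x _ => ?_
  rw [Matrix.inv_def, Ring.inverse_eq_inv']
  rfl

theorem contDiffOn_mulVec {v : E → n → 𝕜} (hM : ∀ i j, ContDiffOn 𝕜 k (fun x => M x i j) t)
    (hv : ContDiffOn 𝕜 k v t) : ContDiffOn 𝕜 k (fun x => M x *ᵥ v x) t :=
  contDiffOn_pi.2 fun i => ContDiffOn.sum fun j _ => (hM i j).mul (contDiffOn_pi.1 hv j)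

end MatrixCalculus

section ReducedInverse

/- `replicateCol n π`, the matrix whose columns all equal `π`, is the projection `P` onto `span {π}`
along `{v | ∑ i, v i = 0}`; it is definitionally the `Matrix.of fun i _ => π i` of the statement. -/

variable {R : Type*} [CommRing R] {L A : Matrix n n R} {π : n → R}

theorem replicateCol_mulVec_eq_sum_smul (π v : n → R) :
    replicateCol n π *ᵥ v = (∑ j, v j) • π := by
  ext i
  simp [mulVec, dotProduct, mul_comm, mul_sum]

theorem sum_mulVec_eq_zero_of_replicateCol_mul_eq_zero (hπ : ∑ i, π i = 1)
    (hPA : replicateCol n π * A = 0) (v : n → R) : ∑ i, (A *ᵥ v) i = 0 := by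
  have h : (∑ i, (A *ᵥ v) i) • π = 0 := by
    rw [← replicateCol_mulVec_eq_sum_smul, mulVec_mulVec, hPA, zero_mulVec]
  simpa [← mul_sum, hπ] using congrArg (fun x => ∑ i, x i) h

theorem mulVec_mulVec_eq_self_of_sum_eq_zero [DecidableEq n]
    (hLA : L * A = 1 - replicateCol n π) {v : n → R} (hv : ∑ i, v i = 0) : L *ᵥ (A *ᵥ v) = v := by
  rw [mulVec_mulVec, hLA, sub_mulVec, one_mulVec, replicateCol_mulVec_eq_sum_smul, hv, zero_smul,
    sub_zero]

theorem add_replicateCol_mul_add_replicateCol [DecidableEq n] (hLπ : L *ᵥ π = 0)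
    (hπ : ∑ i, π i = 1) (hLA : L * A = 1 - replicateCol n π) (hPA : replicateCol n π * A = 0) :
    (L + replicateCol n π) * (A + replicateCol n π) = 1 := by
  have hLP : L * replicateCol n π = 0 := by rw [← replicateCol_mulVec, hLπ, replicateCol_zero]
  have hPP : replicateCol n π * replicateCol n π = replicateCol n π := by
    rw [← replicateCol_mulVec, replicateCol_mulVec_eq_sum_smul, hπ, one_smul]
  rw [add_mul, mul_add, mul_add, hLA, hLP, hPA, hPP]
  abel

end ReducedInverse

theorem contDiffOn_reducedInverse_apply {𝕜 : Type*} [NontriviallyNormedField 𝕜] {E : Type*}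
    [NormedAddCommGroup E] [NormedSpace 𝕜 E] [DecidableEq n] {L A : E → Matrix n n 𝕜}
    {π : E → n → 𝕜} {t : Set E} {k : WithTop ℕ∞}
    (hL : ∀ i j, ContDiffOn 𝕜 k (fun x => L x i j) t) (hπ : ContDiffOn 𝕜 k π t)
    (hLπ : ∀ x ∈ t, L x *ᵥ π x = 0) (hπsum : ∀ x ∈ t, ∑ i, π x i = 1)
    (hLA : ∀ x ∈ t, L x * A x = 1 - replicateCol n (π x))
    (hPA : ∀ x ∈ t, replicateCol n (π x) * A x = 0) (i j : n) :
    ContDiffOn 𝕜 k (fun x => A x i j) t := by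
  have hinv x (hx : x ∈ t) := add_replicateCol_mul_add_replicateCol (hLπ x hx) (hπsum x hx)
    (hLA x hx) (hPA x hx)
  have hM : ∀ i j, ContDiffOn 𝕜 k (fun x => (L x + replicateCol n (π x)) i j) t := fun i j => by
    simpa using (hL i j).add (contDiffOn_pi.1 hπ i)
  refine ((contDiffOn_inv_apply hM (fun x hx => (isUnit_det_of_right_inverse (hinv x hx)).ne_zero)
    i j).sub (contDiffOn_pi.1 hπ i)).congr fun x hx => ?_
  simp [inv_eq_right_inv (hinv x hx)]

theorem sum_eq_zero_of_hasDerivWithinAt_of_sum_eq {f f' : ℝ → n → ℝ} {t : Set ℝ} {c : ℝ}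
    (ht : UniqueDiffOn ℝ t) (hf : ∀ s ∈ t, HasDerivWithinAt f (f' s) t s)
    (hsum : ∀ s ∈ t, ∑ i, f s i = c) {s : ℝ} (hs : s ∈ t) : ∑ i, f' s i = 0 := by
  have hderiv : HasDerivWithinAt (fun u => ∑ i, f u i) (∑ i, f' s i) t s :=
    HasDerivWithinAt.fun_sum fun i _ => hasDerivWithinAt_pi.1 (hf s hs) i
  exact (ht s hs).eq_deriv _ hderiv ((hasDerivWithinAt_const s t c).congr hsum (hsum s hs))

theorem driven_markov_adiabatic_expansion_general
    (d : ℕ)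
    (L : ℝ → Matrix (Fin d) (Fin d) ℝ)
    (A : ℝ → Matrix (Fin d) (Fin d) ℝ)
    (π π' : ℝ → Fin d → ℝ)
    (p : ℝ → ℝ → Fin d → ℝ)
    -- `L` is a `C³` family of Markov generators
    (hLsmooth : ∀ i j, ContDiffOn ℝ 3 (fun s => L s i j) (Icc (0:ℝ) 1))
    (hoffdiag : ∀ s ∈ Icc (0:ℝ) 1, ∀ i j, i ≠ j → 0 ≤ L s i j)
    (hcolsum : ∀ s ∈ Icc (0:ℝ) 1, ∀ j, ∑ i, L s i j = 0)
    -- `π s` is the unique stationary probability distribution, depending `C³` on `s`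
    (hπsmooth : ContDiffOn ℝ 3 π (Icc (0:ℝ) 1))
    (hπ' : ∀ s ∈ Icc (0:ℝ) 1, HasDerivAt π (π' s) s)
    (hπsum : ∀ s ∈ Icc (0:ℝ) 1, ∑ i, π s i = 1)
    (hπstat : ∀ s ∈ Icc (0:ℝ) 1, (L s).mulVec (π s) = 0)
    -- `A s` is the reduced inverse of `L s` (with `P s` the matrix `P_{ij} = π_i(s)`)
    (hLA : ∀ s ∈ Icc (0:ℝ) 1,
      L s * A s = 1 - Matrix.of (fun i _ : Fin d => π s i))
    (hPA : ∀ s ∈ Icc (0:ℝ) 1, Matrix.of (fun i _ : Fin d => π s i) * A s = 0)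
    -- `π̇ 0 = 0`
    (hπ'0 : π' 0 = 0)
    -- `p ε` solves `ε ṗ = L s p` with `p 0 = π 0`
    (hp0 : ∀ ε ∈ Ioc (0:ℝ) 1, p ε 0 = π 0)
    (hpode : ∀ ε ∈ Ioc (0:ℝ) 1, ∀ s ∈ Icc (0:ℝ) 1,
      HasDerivAt (p ε) (ε⁻¹ • (L s).mulVec (p ε s)) s) :
    ∃ C : ℝ, ∀ ε ∈ Ioc (0:ℝ) 1, ∀ s ∈ Icc (0:ℝ) 1,
      ‖p ε s - π s - ε • (A s).mulVec (π' s)‖ ≤ C * ε ^ 2 := by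
  set I := Icc (0:ℝ) 1
  have hI : UniqueDiffOn ℝ I := uniqueDiffOn_Icc one_pos
  have hA i j : ContDiffOn ℝ 2 (fun s => A s i j) I :=
    (contDiffOn_reducedInverse_apply hLsmooth hπsmooth hπstat hπsum hLA hPA i j).of_le
      (by norm_num)
  have hπ'I s (hs : s ∈ I) : HasDerivWithinAt π (π' s) I s := (hπ' s hs).hasDerivWithinAt
  have hπ'C : ContDiffOn ℝ 2 π' I := (hπsmooth.derivWithin hI (by norm_num)).congr
    fun s hs => ((hπ'I s hs).derivWithin (hI s hs)).symm
  set y := fun s => A s *ᵥ π' s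
  have hyC : ContDiffOn ℝ 2 y I := contDiffOn_mulVec hA hπ'C
  set z := fun s => A s *ᵥ derivWithin y I s
  have hzC : ContDiffOn ℝ 1 z I :=
    contDiffOn_mulVec (fun i j => (hA i j).of_le (by norm_num)) (hyC.derivWithin hI le_rfl)
  obtain ⟨Cz, hCz⟩ := isCompact_Icc.exists_bound_of_continuousOn
    ((PiLp.continuous_toLp 1 _).comp_continuousOn hzC.continuousOn)
  obtain ⟨M, hM⟩ := isCompact_Icc.exists_bound_of_continuousOn
    ((PiLp.continuous_toLp 1 _).comp_continuousOn (hzC.continuousOn_derivWithin hI le_rfl))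
  have hM₀ : 0 ≤ M := (norm_nonneg _).trans (hM 0 (left_mem_Icc.2 zero_le_one))
  have hy' s (hs : s ∈ I) := (hyC.differentiableOn (by norm_num) s hs).hasDerivWithinAt
  have hz' s (hs : s ∈ I) := (hzC.differentiableOn one_ne_zero s hs).hasDerivWithinAt
  have hysum s (hs : s ∈ I) : ∑ i, y s i = 0 :=
    sum_mulVec_eq_zero_of_replicateCol_mul_eq_zero (hπsum s hs) (hPA s hs) _
  have hLy s (hs : s ∈ I) : L s *ᵥ y s = π' s := mulVec_mulVec_eq_self_of_sum_eq_zero (hLA s hs)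
    (sum_eq_zero_of_hasDerivWithinAt_of_sum_eq hI hπ'I hπsum hs)
  have hLz s (hs : s ∈ I) : L s *ᵥ z s = derivWithin y I s :=
    mulVec_mulVec_eq_self_of_sum_eq_zero (hLA s hs)
      (sum_eq_zero_of_hasDerivWithinAt_of_sum_eq hI hy' hysum hs)
  have hL u (hu : u ∈ Ico (0:ℝ) 1) : (L u).IsMarkovGenerator :=
    ⟨hoffdiag u (Ico_subset_Icc_self hu), hcolsum u (Ico_subset_Icc_self hu)⟩
  refine ⟨2 * Cz + M, fun ε hε s hs => ?_⟩
  calc ‖p ε s - π s - ε • y s‖ ≤ ‖WithLp.toLp 1 (p ε s - π s - ε • y s)‖ :=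
        norm_le_norm_toLp_one _
    _ ≤ (2 * Cz + M * (s - 0)) * ε ^ 2 :=
        norm_toLp_one_adiabatic_remainder_le hε.1 hL hπ'I hy' hz' hπstat hLy hLz
          (fun u hu => (hpode ε hε u hu).hasDerivWithinAt) (by simp [y, hp0 ε hε, hπ'0])
          hCz (fun u hu => hM u (Ico_subset_Icc_self hu)) s hs
    _ ≤ (2 * Cz + M) * ε ^ 2 := by
        gcongr
        nlinarith [hs.2]

/-- **Adiabatic expansion for driven Markov processes.**  Let `L s` be a `C³`
family of generators of continuous-time Markov processes on a finite state space of `d`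
elements (off-diagonal entries nonnegative, columns summing to zero), each with a unique
stationary probability distribution `π s`, with `ker (L s) = span {π s}` and
`ran (L s) = {p : ∑ p_i = 0}`.  Let `P s` be the projection with entries `P_{ij} = π_i`
and `A s` the reduced inverse of `L s`.  If `π̇ 0 = 0`, then the solution of
`ε ṗ = L s p`, `p 0 = π 0`, satisfies `‖p ε s − π s − ε A s π̇ s‖ ≤ C ε²` uniformly in
`s ∈ [0,1]` and `ε ∈ (0,1]`. -/
theorem driven_markov_adiabatic_expansion
    (d : ℕ) (hd : 1 ≤ d)
    (L : ℝ → Matrix (Fin d) (Fin d) ℝ)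
    (A : ℝ → Matrix (Fin d) (Fin d) ℝ)
    (π π' : ℝ → Fin d → ℝ)
    (p : ℝ → ℝ → Fin d → ℝ)
    -- `L` is a `C³` family of Markov generators
    (hLsmooth : ∀ i j, ContDiffOn ℝ 3 (fun s => L s i j) (Icc (0:ℝ) 1))
    (hoffdiag : ∀ s ∈ Icc (0:ℝ) 1, ∀ i j, i ≠ j → 0 ≤ L s i j)
    (hcolsum : ∀ s ∈ Icc (0:ℝ) 1, ∀ j, ∑ i, L s i j = 0)
    -- `π s` is the unique stationary probability distribution, depending `C³` on `s`
    (hπsmooth : ContDiffOn ℝ 3 π (Icc (0:ℝ) 1))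
    (hπ' : ∀ s ∈ Icc (0:ℝ) 1, HasDerivAt π (π' s) s)
    (hπnonneg : ∀ s ∈ Icc (0:ℝ) 1, ∀ i, 0 ≤ π s i)
    (hπsum : ∀ s ∈ Icc (0:ℝ) 1, ∑ i, π s i = 1)
    (hπstat : ∀ s ∈ Icc (0:ℝ) 1, (L s).mulVec (π s) = 0)
    -- `ker (L s) = span {π s}` and `ran (L s) = {p : ∑ᵢ pᵢ = 0}`
    (hker : ∀ s ∈ Icc (0:ℝ) 1, ∀ q : Fin d → ℝ,
      (L s).mulVec q = 0 → ∃ c : ℝ, q = c • π s)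
    (hran : ∀ s ∈ Icc (0:ℝ) 1,
      {q : Fin d → ℝ | ∃ v, (L s).mulVec v = q} = {q : Fin d → ℝ | ∑ i, q i = 0})
    -- `A s` is the reduced inverse of `L s` (with `P s` the matrix `P_{ij} = π_i(s)`)
    (hAL : ∀ s ∈ Icc (0:ℝ) 1,
      A s * L s = 1 - Matrix.of (fun i _ : Fin d => π s i))
    (hLA : ∀ s ∈ Icc (0:ℝ) 1,
      L s * A s = 1 - Matrix.of (fun i _ : Fin d => π s i))
    (hAP : ∀ s ∈ Icc (0:ℝ) 1, A s * Matrix.of (fun i _ : Fin d => π s i) = 0)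
    (hPA : ∀ s ∈ Icc (0:ℝ) 1, Matrix.of (fun i _ : Fin d => π s i) * A s = 0)
    -- `π̇ 0 = 0`
    (hπ'0 : π' 0 = 0)
    -- `p ε` solves `ε ṗ = L s p` with `p 0 = π 0`
    (hp0 : ∀ ε ∈ Ioc (0:ℝ) 1, p ε 0 = π 0)
    (hpode : ∀ ε ∈ Ioc (0:ℝ) 1, ∀ s ∈ Icc (0:ℝ) 1,
      HasDerivAt (p ε) (ε⁻¹ • (L s).mulVec (p ε s)) s) :
    ∃ C : ℝ, ∀ ε ∈ Ioc (0:ℝ) 1, ∀ s ∈ Icc (0:ℝ) 1,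
      ‖p ε s - π s - ε • (A s).mulVec (π' s)‖ ≤ C * ε ^ 2 :=
  driven_markov_adiabatic_expansion_general d L A π π' p hLsmooth hoffdiag hcolsum hπsmooth hπ'
    hπsum hπstat hLA hPA hπ'0 hp0 hpode
end

section
/- Characterization of dephasing Lindbladians, part 1. Let 𝓗 be a complex Hilbert space, let H ∈ B(𝓗) be a bounded self-adjoint operator, and let Γ_1, …, Γ_m ∈ B(𝓗). Define the Heisenberg-picture generator L_*(a) = i[H,a] + ½ Σ_{α=1}^m ( 2 Γ_α* a Γ_α − Γ_α*Γ_α a − a Γ_α*Γ_α ) for a ∈ B(𝓗). Suppose that L_*(a) = 0 for every a ∈ B(𝓗) commuting with H (i.e. ker L_* contains the commutant {H}' = {a ∈ B(𝓗) : Ha = aH}). Then each Γ_α belongs to the bicommutant of H: Γ_α a = a Γ_α for every a ∈ B(𝓗) with Ha = aH. -/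
/-!
For `a` commuting with `H`, so do `a*` (as `H` is self-adjoint) and `a*a`, hence `L_*` kills all
three. The commutator part of `L_*` is a derivation and drops out of
`L_*(a*a) - a* L_*(a) - L_*(a*) a`, which therefore equals `∑ α, [a,Γ_α]* [a,Γ_α]`. A vanishing
sum of positive elements of a C*-algebra has vanishing summands, and `x* x = 0` forces `x = 0`.
-/

open Finset

section Lindblad

variable {A ι : Type*} [Ring A] [StarRing A] [Algebra ℂ A] [Fintype ι]

def lindbladDissipator (g a : A) : A :=
  (2:ℂ) • (star g * a * g) - star g * g * a - a * (star g * g)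

noncomputable def lindbladGenerator (H : A) (Γ : ι → A) (a : A) : A :=
  Complex.I • (H * a - a * H) + (2:ℂ)⁻¹ • ∑ α, lindbladDissipator (Γ α) a

theorem lindbladDissipator_star_mul_self_sub (g a : A) :
    lindbladDissipator g (star a * a) - star a * lindbladDissipator g a
      - lindbladDissipator g (star a) * a = (2:ℂ) • (star (a * g - g * a) * (a * g - g * a)) := by
  simp only [lindbladDissipator, two_smul, star_sub, star_mul]
  noncomm_ring

theorem lindbladGenerator_star_mul_self_sub (H : A) (Γ : ι → A) (a : A) :
    lindbladGenerator H Γ (star a * a) - star a * lindbladGenerator H Γ a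
      - lindbladGenerator H Γ (star a) * a =
        ∑ α, star (a * Γ α - Γ α * a) * (a * Γ α - Γ α * a) := by
  have hderivation : (H * (star a * a) - star a * a * H) - star a * (H * a - a * H)
      - (H * star a - star a * H) * a = 0 := by
    noncomm_ring
  calc _ = Complex.I • ((H * (star a * a) - star a * a * H) - star a * (H * a - a * H)
          - (H * star a - star a * H) * a)
        + (2:ℂ)⁻¹ • ∑ α, (lindbladDissipator (Γ α) (star a * a)
          - star a * lindbladDissipator (Γ α) a - lindbladDissipator (Γ α) (star a) * a) := by
        simp only [lindbladGenerator, sum_sub_distrib, mul_sum, sum_mul, mul_add, add_mul,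
          mul_sub, sub_mul, mul_smul_comm, smul_mul_assoc, smul_sub]
        abel
    _ = _ := by
      simp only [hderivation, lindbladDissipator_star_mul_self_sub, ← smul_sum, smul_smul,
        smul_zero, zero_add]
      norm_num

end Lindblad

theorem CStarRing.eq_zero_of_sum_star_mul_self_eq_zero {E ι : Type*} [NonUnitalNormedRing E]
    [StarRing E] [CStarRing E] [PartialOrder E] [StarOrderedRing E] {s : Finset ι} {f : ι → E}
    (h : ∑ i ∈ s, star (f i) * f i = 0) {i : ι} (hi : i ∈ s) : f i = 0 :=
  (star_mul_self_eq_zero_iff _).mp <|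
    (sum_eq_zero_iff_of_nonneg fun j _ => star_mul_self_nonneg (f j)).mp h i hi

/-- **Characterization of dephasing Lindbladians, part 1.**  Let `H` be a
bounded self-adjoint operator on a complex Hilbert space `𝓗` and `Γ_1, …, Γ_m` bounded
operators.  If the Heisenberg generator
`L_*(a) = i[H,a] + ½ ∑_α (2 Γ_α* a Γ_α − Γ_α*Γ_α a − a Γ_α*Γ_α)` annihilates every
bounded operator commuting with `H`, then every `Γ_α` lies in the bicommutant of `H`:
`Γ_α` commutes with every bounded operator commuting with `H`. -/
theorem dephasing_lindbladian_heisenberg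
    {𝓗 : Type*} [NormedAddCommGroup 𝓗] [InnerProductSpace ℂ 𝓗] [CompleteSpace 𝓗]
    (H : 𝓗 →L[ℂ] 𝓗) (hH : IsSelfAdjoint H)
    (m : ℕ) (Γ : Fin m → 𝓗 →L[ℂ] 𝓗)
    -- `ker L_*` contains the commutant of `H`
    (hker : ∀ a : 𝓗 →L[ℂ] 𝓗, H * a = a * H →
      Complex.I • (H * a - a * H) +
        (2:ℂ)⁻¹ • ∑ α, ((2:ℂ) • (star (Γ α) * a * Γ α)
          - star (Γ α) * Γ α * a - a * (star (Γ α) * Γ α)) = 0) :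
    ∀ α, ∀ a : 𝓗 →L[ℂ] 𝓗, H * a = a * H → Γ α * a = a * Γ α := by
  intro α a ha
  have hL : ∀ b, Commute H b → lindbladGenerator H Γ b = 0 := hker
  have ha_star : Commute H (star a) := by simpa only [hH.star_eq] using Commute.star_star ha
  have hsum : ∑ β, star (a * Γ β - Γ β * a) * (a * Γ β - Γ β * a) = 0 := by
    rw [← lindbladGenerator_star_mul_self_sub, hL _ (ha_star.mul_right ha), hL a ha,
      hL _ ha_star, mul_zero, zero_mul, sub_zero, sub_zero]
  exact (sub_eq_zero.mp (CStarRing.eq_zero_of_sum_star_mul_self_eq_zero hsum (mem_univ α))).symm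
end

section
/- Characterization of dephasing Lindbladians, part 2 (finite dimension). Let H be a Hermitian n×n complex matrix and let Γ_1, …, Γ_m be n×n matrices each of which is a function of H, i.e. Γ_α = f_α(H) obtained by applying a function f_α to H via the functional calculus (equivalently, each Γ_α is a polynomial in H). Define the Lindbladian L(ρ) = −i[H,ρ] + ½ Σ_{α=1}^m ( [Γ_α ρ, Γ_α*] + [Γ_α, ρ Γ_α*] ) on n×n matrices ρ. Then ker L = ker([H,·]): for every matrix ρ, L(ρ) = 0 if and only if [H,ρ] = 0. -/
/-!
Conjugation by the eigenvector unitary of `H` is a ⋆-algebra automorphism, so it commutes with the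
Lindbladian and with polynomial evaluation; it turns `H` into `diagonal e` and `Γ_α = q_α(H)` into
`diagonal (q_α ∘ e)`. For diagonal data the Lindbladian multiplies the `(j, k)` entry by a scalar
with real part `-½ ∑_α |q_α(e_j) - q_α(e_k)|²`. That scalar can only vanish if every
`q_α(e_j) = q_α(e_k)`, and then it equals `-i (e_j - e_k)`; so it vanishes exactly when `e_j = e_k`,
i.e. exactly when `[diagonal e, ·]` kills the `(j, k)` entry.
-/

open Finset Matrix Polynomial ComplexConjugate Complex

theorem Matrix.aeval_diagonal {R n : Type*} [CommSemiring R] [Fintype n] [DecidableEq n]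
    (d : n → R) (p : R[X]) : aeval (diagonal d) p = diagonal fun i => p.eval (d i) := by
  rw [← diagonalAlgHom_apply R, aeval_algHom_apply, aeval_pi_apply]
  simp only [coe_aeval_eq_eval, diagonalAlgHom_apply]

section Lindbladian

variable {A ι : Type*} [Ring A] [StarRing A] [Algebra ℂ A] [Fintype ι]

noncomputable def lindbladian (H : A) (Γ : ι → A) (ρ : A) : A :=
  -I • (H * ρ - ρ * H) +
    (2 : ℂ)⁻¹ • ∑ α, ((Γ α * ρ) * star (Γ α) - star (Γ α) * (Γ α * ρ)
      + (Γ α * (ρ * star (Γ α)) - (ρ * star (Γ α)) * Γ α))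

theorem map_lindbladian {B F : Type*} [Ring B] [StarRing B] [Algebra ℂ B] [FunLike F A B]
    [AlgHomClass F ℂ A B] [StarHomClass F A B] (φ : F) (H : A) (Γ : ι → A) (ρ : A) :
    φ (lindbladian H Γ ρ) = lindbladian (φ H) (φ ∘ Γ) (φ ρ) := by
  simp [lindbladian, map_star]

end Lindbladian

theorem lindbladian_diagonal_apply {n ι : Type*} [Fintype n] [DecidableEq n] [Fintype ι]
    (e : n → ℂ) (g : ι → n → ℂ) (σ : Matrix n n ℂ) (j k : n) :
    lindbladian (diagonal e) (fun α => diagonal (g α)) σ j k =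
      (-I * (e j - e k) + ∑ α, (g α j * conj (g α k) - (normSq (g α j) + normSq (g α k)) / 2))
        * σ j k := by
  simp only [lindbladian, Matrix.add_apply, Matrix.smul_apply, Matrix.sub_apply, Matrix.sum_apply,
    diagonal_mul, mul_diagonal, star_eq_conjTranspose, diagonal_conjTranspose, Pi.star_apply,
    smul_eq_mul, star_def, ← mul_conj]
  rw [add_mul, Finset.sum_mul, Finset.mul_sum]
  congr 1
  · ring
  · refine Finset.sum_congr rfl fun α _ => ?_
    ring

theorem lindbladian_coeff_eq_zero_iff {ι : Type*} [Fintype ι] {x y : ℝ} {v w : ι → ℂ}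
    (hvw : x = y → v = w) :
    -I * (x - y) + ∑ α, (v α * conj (w α) - (normSq (v α) + normSq (w α)) / 2) = 0 ↔ x = y := by
  refine ⟨fun h => ?_, fun h => ?_⟩
  · have hterm : ∀ a b : ℂ,
        (a * conj b - (normSq a + normSq b : ℂ) / 2).re = -normSq (a - b) / 2 := by
      intro a b
      simp only [normSq_apply, ofReal_add, ofReal_mul, sub_re, mul_re, conj_re, conj_im, add_re,
        div_ofNat_re, ofReal_re, ofReal_im, sub_im]
      ring
    have hre : ∑ α, normSq (v α - w α) = 0 := by
      have := congrArg re h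
      simp only [add_re, re_sum, hterm, ← ofReal_sub, mul_re, neg_re, I_re, ofReal_re, neg_im, I_im,
        ofReal_im, zero_re] at this
      rw [← Finset.sum_div, Finset.sum_neg_distrib] at this
      linarith
    obtain rfl : v = w := by
      funext α
      exact sub_eq_zero.mp <| normSq_eq_zero.mp <|
        (Finset.sum_eq_zero_iff_of_nonneg fun α _ => normSq_nonneg _).mp hre α (mem_univ α)
    simpa [mul_conj, sub_eq_zero] using h
  · subst h
    simp [hvw rfl, mul_conj]

/-- **Characterization of dephasing Lindbladians, part 2, finite dimension.**
Let `H` be a Hermitian `n×n` complex matrix and `Γ_1, …, Γ_m` matrices which are functions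
of `H` (polynomials in `H`, equivalently functions of `H` by the functional calculus).
Define the Lindbladian `L(ρ) = −i[H,ρ] + ½ ∑_α ([Γ_α ρ, Γ_α*] + [Γ_α, ρ Γ_α*])`.  Then
`ker L = ker [H,·]`: for every matrix `ρ`, `L ρ = 0` if and only if `[H, ρ] = 0`. -/
theorem dephasing_lindbladian_kernel_finite_dim
    (n : ℕ) (H : Matrix (Fin n) (Fin n) ℂ) (hH : H.IsHermitian)
    (m : ℕ) (Γ : Fin m → Matrix (Fin n) (Fin n) ℂ)
    -- each `Γ_α` is a function of `H`
    (hΓ : ∀ α, ∃ q : Polynomial ℂ, Γ α = Polynomial.aeval H q) :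
    ∀ ρ : Matrix (Fin n) (Fin n) ℂ,
      (-Complex.I • (H * ρ - ρ * H) +
        (2:ℂ)⁻¹ • ∑ α, ((Γ α * ρ) * star (Γ α) - star (Γ α) * (Γ α * ρ)
          + (Γ α * (ρ * star (Γ α)) - (ρ * star (Γ α)) * Γ α)) = 0)
      ↔ H * ρ = ρ * H := by
  intro ρ
  choose q hq using hΓ
  set φ := Unitary.conjStarAlgAut ℂ _ hH.eigenvectorUnitary
  set e := hH.eigenvalues
  set g : Fin m → Fin n → ℂ := fun α i => (q α).eval (e i : ℂ)
  have hH_eq : H = φ (diagonal (ofReal ∘ e)) := hH.spectral_theorem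
  have hΓ_eq : Γ = φ ∘ fun α => diagonal (g α) := by
    funext α
    rw [hq α, hH_eq, Function.comp_apply, aeval_algHom_apply, aeval_diagonal]
    rfl
  obtain ⟨σ, rfl⟩ := EquivLike.surjective φ ρ
  change lindbladian H Γ (φ σ) = 0 ↔ _
  rw [hΓ_eq, hH_eq, ← map_lindbladian, EmbeddingLike.map_eq_zero_iff, ← map_mul, ← map_mul,
    EmbeddingLike.apply_eq_iff_eq, ← Matrix.ext_iff, ← Matrix.ext_iff]
  refine forall₂_congr fun j k => ?_
  have hg : e j = e k → (fun α => g α j) = fun α => g α k := fun h => by simp only [g, h]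
  rw [lindbladian_diagonal_apply, Matrix.zero_apply, diagonal_mul, mul_diagonal]
  simp only [Function.comp_apply]
  rw [mul_eq_zero, lindbladian_coeff_eq_zero_iff hg, mul_comm (σ j k), mul_eq_mul_right_iff,
    ofReal_inj]
end
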